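/- arXiv:2106.02905 — 7 statements merged into one kernel-verified Lean document; each statement's English description precedes it below -/
import Mathlib

section
/- Let G be a graph with n+1 vertices and 1 + C(n,2) edges, equipped with a cute n-edge-colouring (i.e., the n colour classes have sizes 1, 1, 2, 3, ..., n-1). Then G has a heterochromatic spanning tree. -/
/-!
Index the colour classes so that class `i` has `max (i - 1) 1` edges. Any `k ≥ 1` of them
together have at least `1 + C(k, 2)` edges, whereas an edge set of graphic-matroid rank `k - 1`
(number of vertices minus number of components) has at most `C(k, 2)` edges, because its
components have sizes `s_j` with `∑ (s_j - 1) = k - 1`. So the classes satisfy Rado's condition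
in the graphic matroid, and Rado's theorem picks one edge from each class so that these `n`
edges have rank `n`: a forest with `n` edges on `n + 1` vertices, i.e. a spanning tree.
-/

open Finset Function SimpleGraph

lemma Nat.succ_choose_two (n : ℕ) : (n + 1).choose 2 = n.choose 2 + n := by
  rw [Nat.choose_succ_succ', Nat.choose_one_right, add_comm]

lemma Nat.choose_two_add_choose_two_le (a b : ℕ) :
    (a + 1).choose 2 + (b + 1).choose 2 ≤ (a + b + 1).choose 2 := by
  induction b with
  | zero => simp
  | succ b ih =>
    rw [show a + (b + 1) + 1 = a + b + 1 + 1 by ring, Nat.succ_choose_two (b + 1),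
      Nat.succ_choose_two (a + b + 1)]
    omega

lemma Finset.sum_choose_two_le {ι : Type*} (t : Finset ι) (f : ι → ℕ) :
    ∑ i ∈ t, (f i + 1).choose 2 ≤ (∑ i ∈ t, f i + 1).choose 2 := by
  classical
  induction t using Finset.induction_on with
  | empty => simp
  | insert a t ha ih =>
    rw [sum_insert ha, sum_insert ha, add_assoc]
    exact (Nat.add_le_add_left ih _).trans (Nat.choose_two_add_choose_two_le _ _)

lemma Finset.choose_two_card_lt_sum_max_sub_one_one {I : Finset ℕ} (hI : ∀ i ∈ I, 1 ≤ i)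
    (hne : I.Nonempty) : (#I).choose 2 < ∑ i ∈ I, max (i - 1) 1 := by
  induction I using Finset.induction_on_max with
  | empty => simp at hne
  | insert a I ha ih =>
    rw [sum_insert fun h => (ha a h).false, card_insert_of_notMem fun h => (ha a h).false]
    rcases I.eq_empty_or_nonempty with rfl | hI'
    · simp
    have ih := ih (fun i hi => hI i (mem_insert_of_mem hi)) hI'
    have hIa : #I + 1 ≤ a := by
      have := card_le_card fun i hi => mem_Ico.mpr ⟨hI i (mem_insert_of_mem hi), ha i hi⟩
      rw [Nat.card_Ico] at this
      have := hI a (mem_insert_self a I)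
      omega
    rw [Nat.succ_choose_two, add_comm (max _ _)]
    exact Nat.add_lt_add_of_lt_of_le ih (le_max_of_le_left (by omega))

section Rado

variable {α ι : Type*} [DecidableEq α]

structure IsMatroidRank (r : Finset α → ℕ) : Prop where
  le_card : ∀ X, r X ≤ #X
  mono : Monotone r
  union_add_inter_le : ∀ X Y, r (X ∪ Y) + r (X ∩ Y) ≤ r X + r Y

def RadoCondition (r : Finset α → ℕ) (A : ι → Finset α) (s : Finset ι) : Prop :=
  ∀ I ⊆ s, #I ≤ r (I.biUnion A)

namespace IsMatroidRank

variable {r : Finset α → ℕ}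

lemma of_insert (h_empty : r ∅ = 0) (h_insert : ∀ e X, r (insert e X) ≤ r X + 1)
    (h_mono : Monotone r)
    (h_diminish : ∀ ⦃X Y⦄, X ⊆ Y → ∀ e, r (insert e Y) + r X ≤ r Y + r (insert e X)) :
    IsMatroidRank r where
  le_card X := by
    induction X using Finset.induction_on with
    | empty => simp [h_empty]
    | insert e X he ih => rw [card_insert_of_notMem he]; exact (h_insert e X).trans (by omega)
  mono := h_mono
  union_add_inter_le X Y := by
    suffices h : ∀ C ⊆ X, ∀ D, r (X ∪ D) + r C ≤ r X + r (C ∪ D) by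
      have := h (X ∩ Y) inter_subset_left Y
      rwa [union_eq_right.mpr inter_subset_right] at this
    intro C hC D
    induction D using Finset.induction_on with
    | empty => simp
    | insert e D _ ih =>
      have := h_diminish (union_subset_union hC (Subset.refl D)) e
      rw [union_insert, union_insert]
      omega

lemma exists_transversal_of_card_le_one [Nonempty α] (hr : IsMatroidRank r)
    {A : ι → Finset α} {s : Finset ι} (hA : RadoCondition r A s) (hle : ∀ i ∈ s, #(A i) ≤ 1) :
    ∃ t : ι → α, (∀ i ∈ s, t i ∈ A i) ∧ #s ≤ r (s.image t) := by
  have hsingleton : ∀ i ∈ s, ∃ a, A i = {a} := fun i hi => by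
    have := (hA {i} (singleton_subset_iff.mpr hi)).trans (hr.le_card _)
    rw [singleton_biUnion, card_singleton] at this
    exact card_eq_one.mp ((hle i hi).antisymm this)
  choose! t ht using hsingleton
  refine ⟨t, fun i hi => ht i hi ▸ mem_singleton_self _, ?_⟩
  rw [← biUnion_singleton, ← biUnion_congr rfl ht]
  exact hA s Subset.rfl

end IsMatroidRank

variable [DecidableEq ι]

lemma mem_update_erase {A : ι → Finset α} {i j : ι} {x a : α} :
    a ∈ update A i ((A i).erase x) j ↔ a ∈ A j ∧ (j = i → a ≠ x) := by
  by_cases h : j = i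
  · subst h; simp [and_comm]
  · simp [h]

lemma update_erase_subset (A : ι → Finset α) (i j : ι) (x : α) :
    update A i ((A i).erase x) j ⊆ A j :=
  fun _ ha => (mem_update_erase.mp ha).1

lemma biUnion_update_erase_of_notMem (A : ι → Finset α) {I : Finset ι} {i : ι} (hi : i ∉ I)
    (x : α) : I.biUnion (update A i ((A i).erase x)) = I.biUnion A :=
  biUnion_congr rfl fun j hj => by rw [update_of_ne (ne_of_mem_of_not_mem hj hi)]

lemma biUnion_union_subset_union_update_erase (A : ι → Finset α) {I J : Finset ι} {i : ι}
    (hiI : i ∈ I) (hiJ : i ∈ J) {x y : α} (hxy : x ≠ y) :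
    (I ∪ J).biUnion A ⊆
      I.biUnion (update A i ((A i).erase x)) ∪ J.biUnion (update A i ((A i).erase y)) := by
  intro a ha
  obtain ⟨j, hj, haj⟩ := mem_biUnion.mp ha
  simp only [mem_union, mem_biUnion, mem_update_erase]
  by_cases hji : j = i
  · subst hji
    by_cases hax : a = x
    · exact Or.inr ⟨j, hiJ, haj, fun _ => hax ▸ hxy⟩
    · exact Or.inl ⟨j, hiI, haj, fun _ => hax⟩
  · rcases mem_union.mp hj with hj | hj
    · exact Or.inl ⟨j, hj, haj, fun h => absurd h hji⟩
    · exact Or.inr ⟨j, hj, haj, fun h => absurd h hji⟩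

lemma biUnion_erase_inter_subset_inter_update_erase (A : ι → Finset α) (I J : Finset ι) (i : ι)
    (x y : α) : ((I ∩ J).erase i).biUnion A ⊆
      I.biUnion (update A i ((A i).erase x)) ∩ J.biUnion (update A i ((A i).erase y)) := by
  intro a ha
  obtain ⟨j, hj, haj⟩ := mem_biUnion.mp ha
  obtain ⟨hji, hjIJ⟩ := mem_erase.mp hj
  simp only [mem_inter, mem_biUnion, mem_update_erase]
  exact ⟨⟨j, (mem_inter.mp hjIJ).1, haj, fun h => absurd h hji⟩,
    ⟨j, (mem_inter.mp hjIJ).2, haj, fun h => absurd h hji⟩⟩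

namespace IsMatroidRank

variable {r : Finset α → ℕ}

/-- If both deletions failed, the two violating subfamilies `I ∋ i` and `J ∋ i` would by
submodularity give `#(I ∪ J) + #((I ∩ J) \ {i}) < #I + #J`. -/
lemma radoCondition_update_erase (hr : IsMatroidRank r) {A : ι → Finset α} {s : Finset ι}
    (hA : RadoCondition r A s) (i : ι) {x y : α} (hxy : x ≠ y) :
    RadoCondition r (update A i ((A i).erase x)) s ∨
      RadoCondition r (update A i ((A i).erase y)) s := by
  by_contra! ⟨hx, hy⟩
  simp only [RadoCondition, not_forall, not_le, exists_prop] at hx hy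
  obtain ⟨I, hIs, hI⟩ := hx
  obtain ⟨J, hJs, hJ⟩ := hy
  have hiI : i ∈ I := by
    by_contra h
    rw [biUnion_update_erase_of_notMem A h] at hI
    exact (hA I hIs).not_gt hI
  have hiJ : i ∈ J := by
    by_contra h
    rw [biUnion_update_erase_of_notMem A h] at hJ
    exact (hA J hJs).not_gt hJ
  have hunion := biUnion_union_subset_union_update_erase A hiI hiJ hxy
  have hinter := biUnion_erase_inter_subset_inter_update_erase A I J i x y
  have hsub := hr.union_add_inter_le (I.biUnion (update A i ((A i).erase x)))
    (J.biUnion (update A i ((A i).erase y)))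
  have hU := (hA _ (union_subset hIs hJs)).trans (hr.mono hunion)
  have hIJ := (hA _ ((erase_subset _ _).trans (inter_subset_left.trans hIs))).trans
    (hr.mono hinter)
  have hcard := card_union_add_card_inter I J
  have hcard' := card_erase_add_one (mem_inter.mpr ⟨hiI, hiJ⟩)
  omega

/-- **Rado's theorem**, by shrinking the sets one element at a time. -/
theorem exists_transversal [Nonempty α] (hr : IsMatroidRank r) {A : ι → Finset α} {s : Finset ι}
    (hA : RadoCondition r A s) :
    ∃ t : ι → α, (∀ i ∈ s, t i ∈ A i) ∧ #s ≤ r (s.image t) := by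
  induction hN : ∑ i ∈ s, #(A i) using Nat.strong_induction_on generalizing A with
  | _ N ih =>
  by_cases hle : ∀ i ∈ s, #(A i) ≤ 1
  · exact hr.exists_transversal_of_card_le_one hA hle
  push Not at hle
  obtain ⟨i, hi, hlt⟩ := hle
  obtain ⟨x, hx, y, hy, hxy⟩ := one_lt_card.mp hlt
  have hshrink : ∀ z ∈ A i, RadoCondition r (update A i ((A i).erase z)) s →
      ∃ t : ι → α, (∀ i ∈ s, t i ∈ A i) ∧ #s ≤ r (s.image t) := fun z hz hz' => by
    have hlt : ∑ j ∈ s, #(update A i ((A i).erase z) j) < N := hN ▸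
      sum_lt_sum (fun j _ => card_le_card (update_erase_subset A i j z))
        ⟨i, hi, by simpa using card_erase_lt_of_mem hz⟩
    obtain ⟨t, ht, hts⟩ := ih _ hlt hz' rfl
    exact ⟨t, fun j hj => update_erase_subset A i j z (ht j hj), hts⟩
  rcases hr.radoCondition_update_erase hA i hxy with h | h
  · exact hshrink x hx h
  · exact hshrink y hy h

end IsMatroidRank

end Rado

namespace SimpleGraph

variable {V : Type*} (G : SimpleGraph V) {u v : V}

lemma fromEdgeSet_insert (S : Set (Sym2 V)) :
    fromEdgeSet (insert s(u, v) S) = fromEdgeSet S ⊔ edge u v := by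
  rw [Set.insert_eq, fromEdgeSet_union, sup_comm]
  rfl

lemma reachable_sup_edge {a b : V} (h : (G ⊔ edge u v).Reachable a b) :
    G.Reachable a b ∨
      (G.Reachable a u ∨ G.Reachable a v) ∧ (G.Reachable b u ∨ G.Reachable b v) := by
  rw [reachable_iff_reflTransGen] at h
  induction h with
  | refl => exact Or.inl .rfl
  | @tail x c _ hxc ih =>
    have hstep : G.Reachable x c ∨
        (G.Reachable x u ∨ G.Reachable x v) ∧ (G.Reachable c u ∨ G.Reachable c v) := by
      rcases hxc with hxc | hxc
      · exact Or.inl hxc.reachable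
      · rw [edge_adj] at hxc
        rcases hxc.1 with ⟨rfl, rfl⟩ | ⟨rfl, rfl⟩ <;> simp
    rcases ih with hax | ⟨ha, hx⟩ <;> rcases hstep with hxc | ⟨hx', hc⟩
    · exact Or.inl (hax.trans hxc)
    · exact Or.inr ⟨hx'.imp hax.trans hax.trans, hc⟩
    · exact Or.inr ⟨ha, hx.imp hxc.symm.trans hxc.symm.trans⟩
    · exact Or.inr ⟨ha, hc⟩

lemma card_connectedComponent_sup_edge_of_reachable [Finite V] (h : G.Reachable u v) :
    Nat.card (G ⊔ edge u v).ConnectedComponent = Nat.card G.ConnectedComponent := by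
  refine (Nat.card_eq_of_bijective _ ⟨?_, ConnectedComponent.surjective_map_ofLE le_sup_left⟩).symm
  refine ConnectedComponent.ind₂ fun a b hab => ConnectedComponent.sound ?_
  rcases reachable_sup_edge G (ConnectedComponent.exact hab) with hab | ⟨ha, hb⟩
  · exact hab
  · have hu : ∀ {x}, G.Reachable x u ∨ G.Reachable x v → G.Reachable x u :=
      fun hx => hx.elim id (·.trans h.symm)
    exact (hu ha).trans (hu hb).symm

/-- Adding an edge between two components merges exactly those two: the components other than
that of `v` correspond to the components of the new graph. -/
lemma card_connectedComponent_sup_edge_of_not_reachable [Finite V] (h : ¬G.Reachable u v) :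
    Nat.card (G ⊔ edge u v).ConnectedComponent + 1 = Nat.card G.ConnectedComponent := by
  classical
  have hsplit := Nat.card_congr (Equiv.optionSubtypeNe (G.connectedComponentMk v))
  rw [Finite.card_option] at hsplit
  rw [← hsplit, Nat.card_eq_of_bijective
    (fun K : {K // K ≠ G.connectedComponentMk v} => K.1.map (Hom.ofLE le_sup_left)) ⟨?_, ?_⟩]
  · rintro ⟨K, hK⟩ ⟨L, hL⟩ hKL
    induction K using ConnectedComponent.ind with | _ a =>
    induction L using ConnectedComponent.ind with | _ b =>
    refine Subtype.ext (ConnectedComponent.sound ?_)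
    have hav : ¬G.Reachable a v := fun hav => hK (ConnectedComponent.sound hav)
    have hbv : ¬G.Reachable b v := fun hbv => hL (ConnectedComponent.sound hbv)
    rcases reachable_sup_edge G (ConnectedComponent.exact hKL) with hab | ⟨ha, hb⟩
    · exact hab
    · exact (ha.resolve_right hav).trans (hb.resolve_right hbv).symm
  · refine ConnectedComponent.ind fun a => ?_
    by_cases hav : G.Reachable a v
    · refine ⟨⟨G.connectedComponentMk u, fun huv => h (ConnectedComponent.exact huv)⟩, ?_⟩
      refine ConnectedComponent.sound ((Adj.reachable ?_).trans (hav.mono le_sup_left).symm)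
      exact Or.inr ((edge_adj ..).mpr ⟨Or.inl ⟨rfl, rfl⟩, fun huv => h (huv ▸ .rfl)⟩)
    · exact ⟨⟨G.connectedComponentMk a, fun hc => hav (ConnectedComponent.exact hc)⟩, rfl⟩

lemma card_edgeSet_le_choose_two [Fintype V] :
    Nat.card G.edgeSet ≤
      (Fintype.card V - Nat.card G.ConnectedComponent + 1).choose 2 := by
  classical
  have := Fintype.ofFinite G.ConnectedComponent
  set fiber : G.ConnectedComponent → Finset V := fun K => {v | G.connectedComponentMk v = K}
  have hsub : G.edgeSet ⊆
      ↑((univ : Finset G.ConnectedComponent).biUnion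
        fun K => (fiber K).offDiag.image Sym2.mk.uncurry) := by
    intro e he
    induction e using Sym2.ind with | _ x y =>
    simp only [coe_biUnion, coe_image, coe_offDiag, Set.mem_iUnion, Set.mem_image]
    refine ⟨G.connectedComponentMk x, mem_coe.mpr (mem_univ _), (x, y), ?_, rfl⟩
    exact ⟨by simp [fiber], by simpa [fiber] using (ConnectedComponent.sound he.reachable).symm,
      G.ne_of_adj he⟩
  have hfiber_pos : ∀ K, 1 ≤ #(fiber K) := ConnectedComponent.ind fun v =>
    card_pos.mpr ⟨v, by simp [fiber]⟩
  have hfiber_sum : ∑ K, (#(fiber K) - 1) = Fintype.card V - Nat.card G.ConnectedComponent := by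
    have hsum : ∑ K, #(fiber K) = Fintype.card V :=
      (card_eq_sum_card_fiberwise fun v _ => mem_coe.mpr (mem_univ _)).symm
    rw [sum_tsub_distrib _ fun K _ => hfiber_pos K, hsum, sum_const, card_univ, smul_eq_mul,
      mul_one, Nat.card_eq_fintype_card]
  calc Nat.card G.edgeSet
      ≤ #((univ : Finset G.ConnectedComponent).biUnion
          fun K => (fiber K).offDiag.image Sym2.mk.uncurry) := by
        rw [Nat.card_coe_set_eq, ← Set.ncard_coe_finset]
        exact Set.ncard_le_ncard hsub
    _ ≤ ∑ K, (#(fiber K) - 1 + 1).choose 2 := by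
        refine card_biUnion_le.trans (sum_le_sum fun K _ => ?_)
        rw [Sym2.card_image_offDiag, Nat.sub_add_cancel (hfiber_pos K)]
    _ ≤ _ := hfiber_sum ▸ sum_choose_two_le _ _

lemma edgeSet_fromEdgeSet_of_not_isDiag {X : Finset (Sym2 V)} (hX : ∀ e ∈ X, ¬e.IsDiag) :
    (fromEdgeSet (X : Set (Sym2 V))).edgeSet = X := by
  rw [edgeSet_fromEdgeSet, _root_.sdiff_eq_self_iff_disjoint, Set.disjoint_right]
  exact hX

lemma connected_of_card_connectedComponent_eq_one
    (h : Nat.card G.ConnectedComponent = 1) : G.Connected := by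
  obtain ⟨hsub, ⟨K⟩⟩ := Nat.card_eq_one_iff_unique.mp h
  have : Nonempty V := ⟨K.out⟩
  exact ⟨fun a b => ConnectedComponent.exact (Subsingleton.elim _ _)⟩

lemma card_connectedComponent_le [Fintype V] :
    Nat.card G.ConnectedComponent ≤ Fintype.card V :=
  Nat.card_eq_fintype_card (α := V) ▸ Nat.card_le_card_of_surjective _ Quot.mk_surjective

variable [Fintype V]

/-- The rank function of the graphic matroid on `Sym2 V`. -/
noncomputable def edgeRank (X : Finset (Sym2 V)) : ℕ :=
  Fintype.card V - Nat.card (fromEdgeSet (X : Set (Sym2 V))).ConnectedComponent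

lemma edgeRank_empty : edgeRank (∅ : Finset (Sym2 V)) = 0 := by
  have : Fintype.card V ≤ Nat.card (⊥ : SimpleGraph V).ConnectedComponent :=
    Nat.card_eq_fintype_card (α := V) ▸ Nat.card_le_card_of_injective _
      fun a b hab => reachable_bot.mp (ConnectedComponent.exact hab)
  simpa [edgeRank] using Nat.sub_eq_zero_of_le this

lemma edgeRank_mono : Monotone (edgeRank (V := V)) := fun X Y hXY =>
  Nat.sub_le_sub_left (ConnectedComponent.card_le_card_of_le (fromEdgeSet_mono (by simpa))) _

variable {X : Finset (Sym2 V)}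

lemma card_le_choose_two_edgeRank (hX : ∀ e ∈ X, ¬e.IsDiag) :
    #X ≤ (edgeRank X + 1).choose 2 := by
  have := card_edgeSet_le_choose_two (fromEdgeSet (X : Set (Sym2 V)))
  rwa [edgeSet_fromEdgeSet_of_not_isDiag hX, Nat.card_coe_set_eq, Set.ncard_coe_finset] at this

lemma le_edgeRank_of_choose_two_lt (hX : ∀ e ∈ X, ¬e.IsDiag) {k : ℕ} (hk : k.choose 2 < #X) :
    k ≤ edgeRank X := by
  by_contra! h
  have := Nat.choose_le_choose 2 (show edgeRank X + 1 ≤ k from h)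
  have := card_le_choose_two_edgeRank hX
  omega

lemma isTree_fromEdgeSet (hX : ∀ e ∈ X, ¬e.IsDiag) (hcard : #X + 1 = Fintype.card V)
    (hrank : edgeRank X = #X) : (fromEdgeSet (X : Set (Sym2 V))).IsTree := by
  have : Nonempty V := Fintype.card_pos_iff.mp (by omega)
  have hpos := Nat.card_pos (α := (fromEdgeSet (X : Set (Sym2 V))).ConnectedComponent)
  unfold edgeRank at hrank
  refine isTree_iff_connected_and_card.mpr ⟨connected_of_card_connectedComponent_eq_one _ ?_, ?_⟩
  · have := card_connectedComponent_le (fromEdgeSet (X : Set (Sym2 V)))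
    omega
  · rw [edgeSet_fromEdgeSet_of_not_isDiag hX, Nat.card_coe_set_eq, Set.ncard_coe_finset,
      Nat.card_eq_fintype_card, hcard]

variable [DecidableEq V]

lemma edgeRank_insert_of_reachable {X : Finset (Sym2 V)}
    (h : (fromEdgeSet (X : Set (Sym2 V))).Reachable u v) :
    edgeRank (insert s(u, v) X) = edgeRank X := by
  rw [edgeRank, coe_insert, fromEdgeSet_insert,
    card_connectedComponent_sup_edge_of_reachable _ h, edgeRank]

lemma edgeRank_insert_of_not_reachable {X : Finset (Sym2 V)}
    (h : ¬(fromEdgeSet (X : Set (Sym2 V))).Reachable u v) :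
    edgeRank (insert s(u, v) X) = edgeRank X + 1 := by
  have hcard := card_connectedComponent_sup_edge_of_not_reachable _ h
  have hle := card_connectedComponent_le (fromEdgeSet (X : Set (Sym2 V)))
  rw [← fromEdgeSet_insert, ← coe_insert] at hcard
  unfold edgeRank
  omega

lemma edgeRank_insert_le (e : Sym2 V) (X : Finset (Sym2 V)) :
    edgeRank (insert e X) ≤ edgeRank X + 1 := by
  induction e using Sym2.ind with | _ u v =>
  by_cases h : (fromEdgeSet (X : Set (Sym2 V))).Reachable u v
  · rw [edgeRank_insert_of_reachable h]; omega
  · rw [edgeRank_insert_of_not_reachable h]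

/-- An edge joining two vertices that are already connected in the smaller edge set is
redundant in the larger one too. -/
lemma edgeRank_insert_add_le {X Y : Finset (Sym2 V)} (hXY : X ⊆ Y) (e : Sym2 V) :
    edgeRank (insert e Y) + edgeRank X ≤ edgeRank Y + edgeRank (insert e X) := by
  induction e using Sym2.ind with | _ u v =>
  by_cases hY : (fromEdgeSet (Y : Set (Sym2 V))).Reachable u v
  · rw [edgeRank_insert_of_reachable hY]
    exact Nat.add_le_add_left (edgeRank_mono (subset_insert _ _)) _
  · have hX : ¬(fromEdgeSet (X : Set (Sym2 V))).Reachable u v :=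
      fun hX => hY (hX.mono (fromEdgeSet_mono (by simpa)))
    rw [edgeRank_insert_of_not_reachable hY, edgeRank_insert_of_not_reachable hX]
    omega

lemma isMatroidRank_edgeRank : IsMatroidRank (edgeRank (V := V)) :=
  .of_insert edgeRank_empty edgeRank_insert_le edgeRank_mono fun _ _ => edgeRank_insert_add_le

end SimpleGraph

section Colouring

variable {V : Type*} [Fintype V] {G : SimpleGraph V} {col : Sym2 V → ℕ}

noncomputable def colourClass (G : SimpleGraph V) (col : Sym2 V → ℕ) (c : ℕ) :
    Finset (Sym2 V) :=
  (Set.toFinite {e ∈ G.edgeSet | col e = c}).toFinset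

lemma mem_colourClass {c : ℕ} {e : Sym2 V} :
    e ∈ colourClass G col c ↔ e ∈ G.edgeSet ∧ col e = c :=
  Set.Finite.mem_toFinset _

lemma card_colourClass (c : ℕ) :
    #(colourClass G col c) = {e ∈ G.edgeSet | col e = c}.ncard :=
  (Set.ncard_eq_toFinset_card _ _).symm

lemma radoCondition_colourClass [DecidableEq V] {s : Finset ℕ} {g : ℕ → ℕ}
    (hs : ∀ i ∈ s, 1 ≤ i) (hg : Set.InjOn g s)
    (hcute : ∀ i ∈ s, max (i - 1) 1 ≤ #(colourClass G col (g i))) :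
    RadoCondition edgeRank (fun i => colourClass G col (g i)) s := by
  intro I hI
  rcases I.eq_empty_or_nonempty with rfl | hne
  · simp
  refine le_edgeRank_of_choose_two_lt (fun e he => ?_) ?_
  · obtain ⟨i, -, hei⟩ := mem_biUnion.mp he
    exact G.not_isDiag_of_mem_edgeSet (mem_colourClass.mp hei).1
  have hdisj : (I : Set ℕ).PairwiseDisjoint fun i => colourClass G col (g i) := by
    intro i hi j hj hij
    refine disjoint_left.mpr fun e hei hej => hij (hg (hI hi) (hI hj) ?_)
    exact (mem_colourClass.mp hei).2.symm.trans (mem_colourClass.mp hej).2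
  rw [card_biUnion hdisj]
  exact (choose_two_card_lt_sum_max_sub_one_one (fun i hi => hs i (hI hi)) hne).trans_le
    (sum_le_sum fun i hi => hcute i (hI hi))

end Colouring

theorem stmt1_general {V : Type*} [Fintype V] (n : ℕ) (hV : Fintype.card V = n + 1)
    (G : SimpleGraph V)
    (col : Sym2 V → ℕ)
    (g : ℕ → ℕ) (hg : Set.BijOn g (Set.Icc 1 n) (Set.Icc 1 n))
    (hcute : ∀ i ∈ Set.Icc 1 n,
      ({e ∈ G.edgeSet | col e = g i} : Set (Sym2 V)).ncard = max (i - 1) 1) :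
    ∃ T : SimpleGraph V, T ≤ G ∧ T.IsTree ∧ Set.InjOn col T.edgeSet := by
  classical
  obtain ⟨v⟩ : Nonempty V := Fintype.card_pos_iff.mp (by omega)
  have : Nonempty (Sym2 V) := ⟨s(v, v)⟩
  have hrado : RadoCondition edgeRank (fun i => colourClass G col (g i)) (Finset.Icc 1 n) :=
    radoCondition_colourClass (fun i hi => (mem_Icc.mp hi).1)
      (by simpa using hg.injOn) fun i hi => by
        rw [card_colourClass, hcute i (by simpa using hi)]
  obtain ⟨t, ht, hrank⟩ := isMatroidRank_edgeRank.exists_transversal hrado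
  rw [Nat.card_Icc, Nat.add_sub_cancel] at hrank
  set X := (Finset.Icc 1 n).image t
  have hXG : (X : Set (Sym2 V)) ⊆ G.edgeSet := by
    rw [coe_image]
    rintro _ ⟨i, hi, rfl⟩
    exact (mem_colourClass.mp (ht i hi)).1
  have hXloop : ∀ e ∈ X, ¬e.IsDiag := fun e he => G.not_isDiag_of_mem_edgeSet (hXG he)
  have hXcard : #X ≤ n := card_image_le.trans (by simp)
  have hXrank := isMatroidRank_edgeRank.le_card X
  refine ⟨fromEdgeSet X, (fromEdgeSet_le G).mpr (Set.sdiff_subset.trans hXG),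
    isTree_fromEdgeSet hXloop (by omega) (by omega), ?_⟩
  rw [edgeSet_fromEdgeSet_of_not_isDiag hXloop, coe_image, coe_Icc]
  refine Set.InjOn.image_of_comp (hg.injOn.congr fun i hi => ?_)
  exact (mem_colourClass.mp (ht i (by simpa using hi))).2.symm

/-- A graph with `n+1` vertices, `1 + C(n,2)` edges and a cute
`n`-edge-colouring (class sizes `1,1,2,…,n-1`) has a heterochromatic spanning tree. -/
theorem stmt1 {V : Type*} [Fintype V] (n : ℕ) (hV : Fintype.card V = n + 1)
    (G : SimpleGraph V) (hE : G.edgeSet.ncard = 1 + n.choose 2)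
    (col : Sym2 V → ℕ)
    (hcol : ∀ e ∈ G.edgeSet, col e ∈ Set.Icc 1 n)
    (g : ℕ → ℕ) (hg : Set.BijOn g (Set.Icc 1 n) (Set.Icc 1 n))
    (hcute : ∀ i ∈ Set.Icc 1 n,
      ({e ∈ G.edgeSet | col e = g i} : Set (Sym2 V)).ncard = max (i - 1) 1) :
    ∃ T : SimpleGraph V, T ≤ G ∧ T.IsTree ∧ Set.InjOn col T.edgeSet :=
  stmt1_general n hV G col g hg hcute
end

section
/- Let n ≥ 2 and let C be a beautiful n-edge-colouring of the complete graph K_{n+1}. Then K_{n+1} contains at least 2^{⌊(n-1)/2⌋} distinct heterochromatic spanning trees. -/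
open SimpleGraph Set

/-- The colour class of colour `i` of an edge-colouring `col` of `G`. -/
def cclass {V : Type*} (G : SimpleGraph V) (col : Sym2 V → ℕ) (i : ℕ) : Set (Sym2 V) :=
  {e ∈ G.edgeSet | col e = i}

/-- A beautiful `n`-edge-colouring of the complete graph on `V` (`|V| = n+1`):
a nice colouring (`|C_i| = i`) whose monochromatic subgraphs are acyclic, together
with a partition `{V₁, V₂}` with `|V₁| = ⌊(n+1)/2⌋`, `|V₂| = ⌈(n+1)/2⌉` such that
(i) the union of the classes `C_i` with `i ≡ n (mod 2)` induces the complete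
bipartite graph on `(V₁, V₂)`; (ii) each such class splits its vertex set as
`⌊·/2⌋ / ⌈·/2⌉` between `V₁` and `V₂`; (iii) each class `C_i` with `i ≢ n (mod 2)`
has `⌊i/2⌋` edges inside `V₁` and `⌈i/2⌉` edges inside `V₂`. -/
def IsBeautiful {V : Type*} [Fintype V] (n : ℕ) (col : Sym2 V → ℕ) : Prop :=
  (∀ e ∈ (⊤ : SimpleGraph V).edgeSet, col e ∈ Set.Icc 1 n) ∧
  (∀ i ∈ Set.Icc 1 n, (cclass (⊤ : SimpleGraph V) col i).ncard = i) ∧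
  (∀ i ∈ Set.Icc 1 n,
    (SimpleGraph.fromEdgeSet (cclass (⊤ : SimpleGraph V) col i)).IsAcyclic) ∧
  ∃ V1 V2 : Set V, V1 ∪ V2 = Set.univ ∧ Disjoint V1 V2 ∧
    V1.ncard = (n + 1) / 2 ∧ V2.ncard = (n + 2) / 2 ∧
    (∀ u v : V, u ≠ v →
      ((∃ i ∈ Set.Icc 1 n, i % 2 = n % 2 ∧ s(u, v) ∈ cclass (⊤ : SimpleGraph V) col i) ↔
        ((u ∈ V1 ∧ v ∈ V2) ∨ (u ∈ V2 ∧ v ∈ V1)))) ∧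
    (∀ i ∈ Set.Icc 1 n, i % 2 = n % 2 →
      ({v : V | ∃ e ∈ cclass (⊤ : SimpleGraph V) col i, v ∈ e} ∩ V1).ncard =
        {v : V | ∃ e ∈ cclass (⊤ : SimpleGraph V) col i, v ∈ e}.ncard / 2 ∧
      ({v : V | ∃ e ∈ cclass (⊤ : SimpleGraph V) col i, v ∈ e} ∩ V2).ncard =
        ({v : V | ∃ e ∈ cclass (⊤ : SimpleGraph V) col i, v ∈ e}.ncard + 1) / 2) ∧
    (∀ i ∈ Set.Icc 1 n, i % 2 ≠ n % 2 →
      ({e ∈ cclass (⊤ : SimpleGraph V) col i | ∀ v : V, v ∈ e → v ∈ V1}).ncard = i / 2 ∧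
      ({e ∈ cclass (⊤ : SimpleGraph V) col i | ∀ v : V, v ∈ e → v ∈ V2}).ncard = (i + 1) / 2)

/-!
Grow heterochromatic forests one colour at a time. A forest `F` using each colour `1, …, j`
once has `n + 1 - j` components. The edges of `C_{j+1}` inside components of `F` form a forest
whose components refine those of `F`, so there are at most `j` of them and some edge of `C_{j+1}`
extends `F`; the extended forest determines both `F` and the new edge. If moreover `j + 1 ≢ n`
and `F` contains the colour `2 - n % 2 ≡ n`, that edge joins `V₁` to `V₂` whereas every edge of
`C_{j+1}` stays within `V₁` or within `V₂`, so the refinement is strict and there are at least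
two extensions. This happens for `⌊(n - 1) / 2⌋` colours, and the forests using all `n` colours
are heterochromatic spanning trees.
-/

theorem Set.forall_or_of_ncard_le_ncard_sep_add_ncard_sep {α : Type*} {s : Set α}
    (hs : s.Finite) {p q : α → Prop} (hpq : ∀ a ∈ s, p a → ¬q a)
    (h : s.ncard ≤ {a ∈ s | p a}.ncard + {a ∈ s | q a}.ncard) : ∀ a ∈ s, p a ∨ q a := by
  have hdisj : Disjoint {a ∈ s | p a} {a ∈ s | q a} :=
    Set.disjoint_left.mpr fun a ha ha' ↦ hpq a ha.1 ha.2 ha'.2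
  have hsub : {a ∈ s | p a} ∪ {a ∈ s | q a} ⊆ s := union_subset (sep_subset _ _) (sep_subset _ _)
  have heq := eq_of_subset_of_ncard_le hsub
    (by rwa [ncard_union_eq hdisj (hs.subset (sep_subset _ _)) (hs.subset (sep_subset _ _))]) hs
  intro a ha
  rw [← heq] at ha
  exact ha.imp And.right And.right

namespace SimpleGraph

variable {V : Type*} {G H : SimpleGraph V}

theorem Reachable.eq_of_forall_adj {β : Sort*} {f : V → β}
    (hf : ∀ a b, G.Adj a b → f a = f b) {x y : V} (h : G.Reachable x y) : f x = f y := by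
  obtain ⟨w⟩ := h
  induction w with
  | nil => rfl
  | cons hadj _ ih => exact (hf _ _ hadj).trans ih

theorem Reachable.mem_iff_of_forall_edge {C : Set (Sym2 V)} {S : Set V}
    (hC : ∀ e ∈ C, (∀ x ∈ e, x ∈ S) ∨ ∀ x ∈ e, x ∉ S) {a b : V}
    (h : (fromEdgeSet C).Reachable a b) : a ∈ S ↔ b ∈ S :=
  (h.eq_of_forall_adj (f := (· ∈ S)) fun x y hxy ↦ by
    rcases hC _ hxy.1 with hS | hS <;>
      simp [hS x (Sym2.mem_mk_left x y), hS y (Sym2.mem_mk_right x y)]).to_iff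

theorem exists_surjective_connectedComponent_of_forall_adj_reachable
    (h : ∀ a b, G.Adj a b → H.Reachable a b) :
    ∃ φ : G.ConnectedComponent → H.ConnectedComponent, φ.Surjective ∧
      ∀ v, φ (G.connectedComponentMk v) = H.connectedComponentMk v :=
  ⟨Quot.lift H.connectedComponentMk fun _ _ ↦
      Reachable.eq_of_forall_adj fun a b hab ↦ ConnectedComponent.sound (h a b hab),
    fun c ↦ c.ind fun v ↦ ⟨G.connectedComponentMk v, rfl⟩, fun _ ↦ rfl⟩

theorem card_connectedComponent_bot :
    Nat.card (⊥ : SimpleGraph V).ConnectedComponent = Nat.card V :=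
  (Nat.card_eq_of_bijective _ ⟨fun _ _ h ↦ reachable_bot.mp (ConnectedComponent.exact h),
    fun c ↦ c.ind fun v ↦ ⟨v, rfl⟩⟩).symm

theorem edgeSet_fromEdgeSet_inter_edgeSet (C : Set (Sym2 V)) (K : SimpleGraph V) :
    (fromEdgeSet (C ∩ K.edgeSet)).edgeSet = C ∩ K.edgeSet := by
  rw [edgeSet_fromEdgeSet]
  exact sdiff_eq_left.mpr (Set.disjoint_left.mpr fun _ he ↦ K.not_isDiag_of_mem_edgeSet he.2)

theorem reachable_of_adj_fromEdgeSet_inter_fromRel_reachable {C : Set (Sym2 V)} {a b : V}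
    (h : (fromEdgeSet (C ∩ (fromRel H.Reachable).edgeSet)).Adj a b) : H.Reachable a b := by
  obtain ⟨⟨-, hab⟩, -⟩ := h
  obtain ⟨-, hab | hba⟩ := hab
  exacts [hab, hba.symm]

variable [Finite V]

theorem card_connectedComponent_le_of_forall_adj_reachable
    (h : ∀ a b, G.Adj a b → H.Reachable a b) :
    Nat.card H.ConnectedComponent ≤ Nat.card G.ConnectedComponent :=
  have ⟨_, hφ, _⟩ := exists_surjective_connectedComponent_of_forall_adj_reachable h
  Nat.card_le_card_of_surjective _ hφ

theorem card_connectedComponent_lt_of_forall_adj_reachable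
    (h : ∀ a b, G.Adj a b → H.Reachable a b) {a b : V} (hab : H.Adj a b)
    (hnab : ¬G.Reachable a b) :
    Nat.card H.ConnectedComponent < Nat.card G.ConnectedComponent := by
  obtain ⟨φ, hφ, hmk⟩ := exists_surjective_connectedComponent_of_forall_adj_reachable h
  have := Fintype.ofFinite G.ConnectedComponent
  have := Fintype.ofFinite H.ConnectedComponent
  simp only [Nat.card_eq_fintype_card]
  refine Fintype.card_lt_of_surjective_not_injective φ hφ fun hinj ↦ hnab ?_
  rw [← ConnectedComponent.eq]
  exact hinj (by rw [hmk, hmk, ConnectedComponent.eq]; exact hab.reachable)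

theorem card_connectedComponent_sup_edge_add_one {u v : V} (huv : ¬G.Reachable u v) :
    Nat.card (G ⊔ edge u v).ConnectedComponent + 1 = Nat.card G.ConnectedComponent := by
  classical
  refine le_antisymm ?_ ?_
  · have hne : u ≠ v := fun h ↦ huv (h ▸ Reachable.refl u)
    exact card_connectedComponent_lt_of_forall_adj_reachable
      (fun a b hab ↦ (Adj.reachable (Or.inl hab))) (Or.inr (by simp [edge_adj, hne])) huv
  -- Merging the component of `v` into that of `u` descends to the components of `G ⊔ edge u v`,
  -- and every component of `G` except that of `v` is hit.
  let f : V → G.ConnectedComponent := fun w ↦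
    if G.Reachable w v then G.connectedComponentMk u else G.connectedComponentMk w
  have hf : ∀ a b, (G ⊔ edge u v).Adj a b → f a = f b := by
    rintro a b (hab | hab)
    · have hr : G.Reachable a v ↔ G.Reachable b v :=
        ⟨hab.symm.reachable.trans, hab.reachable.trans⟩
      simp only [f, hr]
      split_ifs
      · rfl
      · exact ConnectedComponent.sound hab.reachable
    · have hfu : f u = f v := by simp [f]
      rw [edge_adj] at hab
      obtain ⟨⟨rfl, rfl⟩ | ⟨rfl, rfl⟩, -⟩ := hab
      exacts [hfu, hfu.symm]
  let ψ : (G ⊔ edge u v).ConnectedComponent → G.ConnectedComponent :=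
    Quot.lift f fun _ _ ↦ Reachable.eq_of_forall_adj hf
  have hcover : univ ⊆ insert (G.connectedComponentMk v) (range ψ) := by
    rintro c -
    induction c using ConnectedComponent.ind with | h w => ?_
    by_cases hw : G.Reachable w v
    · exact Or.inl (ConnectedComponent.sound hw)
    · exact Or.inr ⟨(G ⊔ edge u v).connectedComponentMk w, if_neg hw⟩
  calc Nat.card G.ConnectedComponent = (univ : Set _).ncard := (ncard_univ _).symm
    _ ≤ (insert (G.connectedComponentMk v) (range ψ)).ncard := ncard_le_ncard hcover
    _ ≤ (range ψ).ncard + 1 := ncard_insert_le _ _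
    _ ≤ _ := by
      rw [← Nat.card_coe_set_eq]
      exact Nat.add_le_add_right (Finite.card_range_le ψ) 1

theorem IsAcyclic.ncard_edgeSet_add_card_connectedComponent (hG : G.IsAcyclic) :
    G.edgeSet.ncard + Nat.card G.ConnectedComponent = Nat.card V := by
  induction hk : G.edgeSet.ncard using Nat.strong_induction_on generalizing G with
  | _ k ih =>
  obtain hE | ⟨e, he⟩ := G.edgeSet.eq_empty_or_nonempty
  · rw [edgeSet_eq_empty.mp hE] at hk ⊢
    simp [← hk, card_connectedComponent_bot]
  induction e using Sym2.ind with | _ u v => ?_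
  set H := G.deleteEdges {s(u, v)}
  have hGH : H ⊔ edge u v = G := sdiff_sup_cancel (by simpa [edge_le] using Or.inr he)
  have hH : ¬H.Reachable u v := isBridge_iff.mp (isAcyclic_iff_forall_isBridge.mp hG he)
  have hHk : H.edgeSet.ncard = k - 1 := by
    rw [edgeSet_deleteEdges, ncard_sdiff_singleton_of_mem he, hk]
  have hk0 : 0 < k := hk ▸ (ncard_pos (toFinite _)).mpr ⟨_, he⟩
  have := ih _ (by omega) (G := H) (hG.anti (deleteEdges_le _)) hHk
  have := card_connectedComponent_sup_edge_add_one hH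
  rw [hGH] at this
  omega

theorem IsAcyclic.ncard_edgeSet_le_of_forall_adj_reachable (hG : G.IsAcyclic) (hH : H.IsAcyclic)
    (h : ∀ a b, G.Adj a b → H.Reachable a b) : G.edgeSet.ncard ≤ H.edgeSet.ncard := by
  have := hG.ncard_edgeSet_add_card_connectedComponent
  have := hH.ncard_edgeSet_add_card_connectedComponent
  have := card_connectedComponent_le_of_forall_adj_reachable h
  omega

theorem IsAcyclic.ncard_edgeSet_lt_of_forall_adj_reachable (hG : G.IsAcyclic) (hH : H.IsAcyclic)
    (h : ∀ a b, G.Adj a b → H.Reachable a b) {a b : V} (hab : H.Adj a b)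
    (hnab : ¬G.Reachable a b) : G.edgeSet.ncard < H.edgeSet.ncard := by
  have := hG.ncard_edgeSet_add_card_connectedComponent
  have := hH.ncard_edgeSet_add_card_connectedComponent
  have := card_connectedComponent_lt_of_forall_adj_reachable h hab hnab
  omega

theorem ncard_inter_edgeSet_fromRel_reachable_le {C : Set (Sym2 V)}
    (hC : (fromEdgeSet C).IsAcyclic) (hH : H.IsAcyclic) :
    (C ∩ (fromRel H.Reachable).edgeSet).ncard ≤ H.edgeSet.ncard := by
  rw [← edgeSet_fromEdgeSet_inter_edgeSet]
  exact (hC.anti (fromEdgeSet_mono inter_subset_left)).ncard_edgeSet_le_of_forall_adj_reachable hH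
    fun _ _ ↦ reachable_of_adj_fromEdgeSet_inter_fromRel_reachable

theorem ncard_inter_edgeSet_fromRel_reachable_lt {C : Set (Sym2 V)}
    (hC : (fromEdgeSet C).IsAcyclic) (hH : H.IsAcyclic) {a b : V} (hab : H.Adj a b)
    (hnab : ¬(fromEdgeSet C).Reachable a b) :
    (C ∩ (fromRel H.Reachable).edgeSet).ncard < H.edgeSet.ncard := by
  have hle := fromEdgeSet_mono (inter_subset_left (s := C) (t := (fromRel H.Reachable).edgeSet))
  rw [← edgeSet_fromEdgeSet_inter_edgeSet]
  exact (hC.anti hle).ncard_edgeSet_lt_of_forall_adj_reachable hH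
    (fun _ _ ↦ reachable_of_adj_fromEdgeSet_inter_fromRel_reachable) hab
    fun h ↦ hnab (h.mono hle)

end SimpleGraph

section RainbowForests

variable {V : Type*} [Fintype V] {col : Sym2 V → ℕ} {j : ℕ} {F T : SimpleGraph V}

open Classical in
noncomputable def rainbowForests (col : Sym2 V → ℕ) (j : ℕ) : Finset (SimpleGraph V) :=
  {F | F.IsAcyclic ∧ BijOn col F.edgeSet (Icc 1 j)}

-- `fromRel F.Reachable` joins any two distinct vertices of a common component of `F`.
def extensionEdges (col : Sym2 V → ℕ) (F : SimpleGraph V) (i : ℕ) : Set (Sym2 V) :=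
  cclass ⊤ col i \ (fromRel F.Reachable).edgeSet

theorem mem_rainbowForests :
    F ∈ rainbowForests col j ↔ F.IsAcyclic ∧ BijOn col F.edgeSet (Icc 1 j) := by
  simp [rainbowForests]

theorem bot_mem_rainbowForests_zero : ⊥ ∈ rainbowForests col 0 :=
  mem_rainbowForests.mpr ⟨isAcyclic_bot, by simp⟩

theorem ncard_edgeSet_of_mem_rainbowForests (hF : F ∈ rainbowForests col j) :
    F.edgeSet.ncard = j := by
  simp [(mem_rainbowForests.mp hF).2.ncard_eq]

theorem deleteEdges_mem_rainbowForests (hT : T ∈ rainbowForests col (j + 1)) :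
    T.deleteEdges (col ⁻¹' {j + 1}) ∈ rainbowForests col j := by
  obtain ⟨hacyc, hbij⟩ := mem_rainbowForests.mp hT
  refine mem_rainbowForests.mpr ⟨hacyc.anti (deleteEdges_le _), ?_⟩
  convert hbij.subset_right (r := Icc 1 j) (Icc_subset_Icc_right j.le_succ) using 1
  ext e
  have : e ∈ T.edgeSet → col e ∈ Icc 1 (j + 1) := fun h ↦ hbij.mapsTo h
  simp only [edgeSet_deleteEdges, mem_sdiff, mem_preimage, mem_singleton_iff, mem_inter_iff,
    mem_Icc] at this ⊢
  constructor
  · rintro ⟨he, hc⟩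
    exact ⟨he, by have := this he; omega⟩
  · rintro ⟨he, -, hc⟩
    exact ⟨he, by omega⟩

theorem sup_mem_rainbowForests (hF : F ∈ rainbowForests col j)
    {e : Sym2 V} (he : e ∈ extensionEdges col F (j + 1)) :
    F ⊔ fromEdgeSet {e} ∈ rainbowForests col (j + 1) := by
  obtain ⟨hacyc, hbij⟩ := mem_rainbowForests.mp hF
  induction e using Sym2.ind with | _ u v => ?_
  obtain ⟨⟨huv, hcol⟩, hnreach⟩ := he
  replace huv : u ≠ v := by simpa using huv
  have hunreach : ¬F.Reachable u v := fun h ↦ hnreach ((fromRel_adj _ u v).mpr ⟨huv, .inl h⟩)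
  refine mem_rainbowForests.mpr ⟨hacyc.sup_edge_of_not_reachable hunreach, ?_⟩
  rw [show Icc 1 (j + 1) = insert (j + 1) (Icc 1 j) by ext; simp; omega, ← hcol]
  rw [edgeSet_sup, show fromEdgeSet {s(u, v)} = edge u v from rfl, edgeSet_edge_of_ne huv,
    union_singleton]
  exact hbij.insert (by simp [hcol])

theorem sup_fromEdgeSet_deleteEdges (hF : F ∈ rainbowForests col j) {e : Sym2 V}
    (he : col e = j + 1) :
    (F ⊔ fromEdgeSet {e}).deleteEdges (col ⁻¹' {j + 1}) = F := by
  have hmaps := (mem_rainbowForests.mp hF).2.mapsTo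
  ext a b
  have := @hmaps s(a, b)
  simp only [deleteEdges_adj, sup_adj, fromEdgeSet_adj, mem_singleton_iff, mem_preimage,
    mem_edgeSet, mem_Icc] at this ⊢
  constructor
  · rintro ⟨h | ⟨rfl, -⟩, hc⟩
    · exact h
    · exact absurd he hc
  · intro h
    have := this h
    exact ⟨.inl h, by omega⟩

theorem injOn_sup_fromEdgeSet (hF : F ∈ rainbowForests col j) :
    InjOn (fun e ↦ F ⊔ fromEdgeSet {e}) (extensionEdges col F (j + 1)) := by
  intro e he e' _ heq
  simp only at heq
  have hmem : e ∈ (F ⊔ fromEdgeSet {e'}).edgeSet := by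
    rw [← heq, edgeSet_sup, edgeSet_fromEdgeSet]
    exact .inr ⟨rfl, not_isDiag_of_mem_edgeSet _ he.1.1⟩
  rw [edgeSet_sup, edgeSet_fromEdgeSet] at hmem
  rcases hmem with hmem | ⟨rfl, -⟩
  · have := (mem_rainbowForests.mp hF).2.mapsTo hmem
    simp [he.1.2] at this
  · rfl

theorem mul_card_le_card_rainbowForests_succ {m : ℕ}
    (h : ∀ F ∈ rainbowForests col j, m ≤ (extensionEdges col F (j + 1)).ncard) :
    m * (rainbowForests col j).card ≤ (rainbowForests col (j + 1)).card := by
  classical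
  refine Finset.mul_card_image_le_card_of_maps_to (fun T hT ↦ deleteEdges_mem_rainbowForests hT)
    m fun F hF ↦ ?_
  calc m ≤ (extensionEdges col F (j + 1)).ncard := h F hF
    _ = ((F ⊔ fromEdgeSet {·}) '' extensionEdges col F (j + 1)).ncard :=
      ((injOn_sup_fromEdgeSet hF).ncard_image).symm
    _ ≤ _ := by
      rw [← ncard_coe_finset]
      refine ncard_le_ncard (image_subset_iff.mpr fun e he ↦ ?_)
      exact Finset.mem_filter.mpr
        ⟨sup_mem_rainbowForests hF he, sup_fromEdgeSet_deleteEdges hF he.1.2⟩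

theorem ncard_inter_add_ncard_extensionEdges (col : Sym2 V → ℕ) (F : SimpleGraph V) (i : ℕ) :
    (cclass ⊤ col i ∩ (fromRel F.Reachable).edgeSet).ncard + (extensionEdges col F i).ncard =
      (cclass ⊤ col i).ncard :=
  ncard_inter_add_ncard_sdiff_eq_ncard _ _

theorem one_le_ncard_extensionEdges (hF : F ∈ rainbowForests col j)
    (hC : (cclass ⊤ col (j + 1)).ncard = j + 1)
    (hCacyc : (fromEdgeSet (cclass ⊤ col (j + 1))).IsAcyclic) :
    1 ≤ (extensionEdges col F (j + 1)).ncard := by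
  have := ncard_inter_add_ncard_extensionEdges col F (j + 1)
  have := ncard_inter_edgeSet_fromRel_reachable_le hCacyc (mem_rainbowForests.mp hF).1
  rw [ncard_edgeSet_of_mem_rainbowForests hF] at this
  omega

theorem two_le_ncard_extensionEdges (hF : F ∈ rainbowForests col j)
    (hC : (cclass ⊤ col (j + 1)).ncard = j + 1)
    (hCacyc : (fromEdgeSet (cclass ⊤ col (j + 1))).IsAcyclic) {a b : V} (hab : F.Adj a b)
    (hnab : ¬(fromEdgeSet (cclass ⊤ col (j + 1))).Reachable a b) :
    2 ≤ (extensionEdges col F (j + 1)).ncard := by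
  have := ncard_inter_add_ncard_extensionEdges col F (j + 1)
  have := ncard_inter_edgeSet_fromRel_reachable_lt hCacyc (mem_rainbowForests.mp hF).1 hab hnab
  rw [ncard_edgeSet_of_mem_rainbowForests hF] at this
  omega

theorem isTree_of_mem_rainbowForests (hV : Fintype.card V = j + 1)
    (hF : F ∈ rainbowForests col j) : F.IsTree := by
  have hacyc := (mem_rainbowForests.mp hF).1
  have hcard := hacyc.ncard_edgeSet_add_card_connectedComponent
  rw [ncard_edgeSet_of_mem_rainbowForests hF, Nat.card_eq_fintype_card (α := V), hV] at hcard
  have : Subsingleton F.ConnectedComponent :=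
    (Nat.card_eq_one_iff_unique.mp (by omega)).1
  have : Nonempty V := Fintype.card_pos_iff.mp (by omega)
  exact ⟨(connected_iff F).mpr
    ⟨fun u v ↦ ConnectedComponent.exact (Subsingleton.elim _ _), inferInstance⟩, hacyc⟩

end RainbowForests

section Beautiful

variable {V : Type*} [Fintype V] {n j : ℕ} {col : Sym2 V → ℕ} {F : SimpleGraph V}

theorem IsBeautiful.exists_adj_not_reachable (hb : IsBeautiful n col)
    (hF : F ∈ rainbowForests col j) (hjn : j + 1 ≤ n) (hpar : (j + 1) % 2 ≠ n % 2)
    (hj : 2 - n % 2 ≤ j) :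
    ∃ a b, F.Adj a b ∧ ¬(fromEdgeSet (cclass ⊤ col (j + 1))).Reachable a b := by
  obtain ⟨-, hcard, -, V1, V2, -, hdisj, -, -, hcross, -, hinside⟩ := hb
  -- The edge of colour `2 - n % 2` has the parity of `n`, so it crosses from `V1` to `V2` ...
  obtain ⟨e, he, hce⟩ := (mem_rainbowForests.mp hF).2.surjOn (show 2 - n % 2 ∈ Icc 1 j by
    simp only [mem_Icc]; omega)
  induction e using Sym2.ind with | _ u v => ?_
  have hcross' := (hcross u v he.ne).mp ⟨_, ⟨by omega, by omega⟩, by omega, he.ne, hce⟩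
  obtain ⟨a, b, hab, ha, hb⟩ : ∃ a b, F.Adj a b ∧ a ∈ V1 ∧ b ∉ V1 := by
    rcases hcross' with ⟨hu, hv⟩ | ⟨hu, hv⟩
    · exact ⟨u, v, he, hu, Set.disjoint_right.mp hdisj hv⟩
    · exact ⟨v, u, he.symm, hv, Set.disjoint_right.mp hdisj hu⟩
  -- ... while every edge of colour `j + 1` stays inside `V1` or inside `V2`.
  obtain ⟨h1, h2⟩ := hinside (j + 1) ⟨by omega, hjn⟩ hpar
  have hside := Set.forall_or_of_ncard_le_ncard_sep_add_ncard_sep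
    (toFinite (cclass ⊤ col (j + 1)))
    (p := fun e ↦ ∀ x ∈ e, x ∈ V1) (q := fun e ↦ ∀ x ∈ e, x ∈ V2)
    (fun (e : Sym2 V) _ h1 h2 ↦
      Set.disjoint_left.mp hdisj (h1 _ e.out_fst_mem) (h2 _ e.out_fst_mem))
    (by rw [h1, h2, hcard (j + 1) ⟨by omega, hjn⟩]; omega)
  refine ⟨a, b, hab, fun hr ↦ hb ((hr.mem_iff_of_forall_edge fun e he ↦ ?_).mp ha)⟩
  exact (hside e he).imp_right fun h x hx ↦ Set.disjoint_right.mp hdisj (h x hx)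

-- `(j + n % 2 - 1) / 2` counts the colours `i ≤ j` with `i ≢ n` and `i > 2 - n % 2`.
theorem IsBeautiful.two_pow_le_card_rainbowForests (hb : IsBeautiful n col) (hj : j ≤ n) :
    2 ^ ((j + n % 2 - 1) / 2) ≤ (rainbowForests col j).card := by
  induction j with
  | zero =>
    rw [show (0 + n % 2 - 1) / 2 = 0 by omega, pow_zero]
    exact Finset.card_pos.mpr ⟨⊥, bot_mem_rainbowForests_zero⟩
  | succ j ih =>
    have ih := ih (by omega)
    have hC := hb.2.1 (j + 1) ⟨by omega, hj⟩
    have hCacyc := hb.2.2.1 (j + 1) ⟨by omega, hj⟩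
    by_cases hbranch : (j + 1) % 2 ≠ n % 2 ∧ 2 - n % 2 ≤ j
    · have := mul_card_le_card_rainbowForests_succ (m := 2) fun F hF ↦ by
        obtain ⟨a, b, hab, hnab⟩ := hb.exists_adj_not_reachable hF hj hbranch.1 hbranch.2
        exact two_le_ncard_extensionEdges hF hC hCacyc hab hnab
      calc 2 ^ ((j + 1 + n % 2 - 1) / 2) ≤ 2 ^ ((j + n % 2 - 1) / 2 + 1) :=
            Nat.pow_le_pow_right two_pos (by omega)
        _ ≤ _ := by rw [pow_succ]; omega
    · have := mul_card_le_card_rainbowForests_succ (m := 1) fun F hF ↦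
        one_le_ncard_extensionEdges hF hC hCacyc
      rw [show (j + 1 + n % 2 - 1) / 2 = (j + n % 2 - 1) / 2 by omega]
      omega

end Beautiful

theorem stmt5_general (n : ℕ) (col : Sym2 (Fin (n + 1)) → ℕ)
    (hbeautiful : IsBeautiful n col) :
    2 ^ ((n - 1) / 2) ≤
      {T : SimpleGraph (Fin (n + 1)) | T.IsTree ∧ Set.InjOn col T.edgeSet}.ncard := by
  calc 2 ^ ((n - 1) / 2) = 2 ^ ((n + n % 2 - 1) / 2) := by congr 1; omega
    _ ≤ (rainbowForests col n).card := hbeautiful.two_pow_le_card_rainbowForests le_rfl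
    _ = (rainbowForests col n : Set (SimpleGraph (Fin (n + 1)))).ncard := (ncard_coe_finset _).symm
    _ ≤ _ := ncard_le_ncard fun T (hT : T ∈ rainbowForests col n) ↦
      show T.IsTree ∧ _ from ⟨isTree_of_mem_rainbowForests (Fintype.card_fin _) hT,
        (mem_rainbowForests.mp hT).2.injOn⟩

/-- a beautiful `n`-edge-colouring of `K_{n+1}` (`n ≥ 2`) yields at least
`2^{⌊(n-1)/2⌋}` distinct heterochromatic spanning trees. -/
theorem stmt5 (n : ℕ) (hn : 2 ≤ n) (col : Sym2 (Fin (n + 1)) → ℕ)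
    (hbeautiful : IsBeautiful n col) :
    2 ^ ((n - 1) / 2) ≤
      {T : SimpleGraph (Fin (n + 1)) | T.IsTree ∧ Set.InjOn col T.edgeSet}.ncard :=
  stmt5_general n col hbeautiful
end

section
/- Let n ≥ 2 and consider the graceful colouring of K_{n+1}: label vertices 0, 1, ..., n and colour edge uv with |u - v|. Then K_{n+1} contains at least 2^{⌊(n-1)/2⌋} distinct heterochromatic spanning trees. -/
/-!
Fix `m = ⌊(n-1)/2⌋` and a set `A ⊆ {1, …, m}`. Join each vertex `k` with `k ∈ A` or `n - k ∈ A`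
to `n`, and every other nonzero vertex to `0`. Every vertex reaches `0` in two parent steps, so
this is a spanning tree. The edge at `v` has colour `v` or `n - v`; as the flipped vertices come
in pairs `{k, n - k}` that exchange their colours, all `n` colours occur once. Since `A` is the set
of `k ≤ m` adjacent to `n`, distinct `A` give distinct trees.
-/

open SimpleGraph Set

/-- The graceful colouring of `K_{n+1}`: the edge joining `u` and `v` gets colour
`|u - v|`. -/
def gcol (n : ℕ) : Sym2 (Fin (n + 1)) → ℕ :=
  Sym2.lift ⟨fun a b => max a.val b.val - min a.val b.val, fun a b => by
    simp [max_comm, min_comm]⟩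

namespace SimpleGraph

variable {V : Type*} (r : V) (p : V → V)

def parentGraph : SimpleGraph V :=
  fromEdgeSet ((fun v => s(v, p v)) '' {r}ᶜ)

variable {r p}

lemma parentGraph_adj {u w : V} :
    (parentGraph r p).Adj u w ↔ u ≠ w ∧ (u ≠ r ∧ p u = w ∨ w ≠ r ∧ p w = u) := by
  simp only [parentGraph, fromEdgeSet_adj, mem_image, mem_compl_singleton_iff, Sym2.eq_iff]
  constructor
  · rintro ⟨⟨v, hv, ⟨rfl, rfl⟩ | ⟨rfl, rfl⟩⟩, hne⟩
    exacts [⟨hne, .inl ⟨hv, rfl⟩⟩, ⟨hne, .inr ⟨hv, rfl⟩⟩]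
  · rintro ⟨hne, ⟨hu, rfl⟩ | ⟨hw, rfl⟩⟩
    exacts [⟨⟨u, hu, .inl ⟨rfl, rfl⟩⟩, hne⟩, ⟨⟨w, hw, .inr ⟨rfl, rfl⟩⟩, hne⟩]

section RootReachable

variable (hroot : ∀ v, ∃ k, p^[k] v = r)
include hroot

lemma apply_ne_self_of_exists_iterate_eq {v : V} (hv : v ≠ r) : p v ≠ v := by
  intro hfix
  obtain ⟨k, hk⟩ := hroot v
  exact hv (Function.iterate_fixed hfix k ▸ hk)

lemma parentGraph_reachable (v : V) : (parentGraph r p).Reachable v r := by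
  obtain ⟨k, hk⟩ := hroot v
  induction k generalizing v with
  | zero => exact hk ▸ Reachable.refl v
  | succ k ih =>
    by_cases hv : v = r
    · exact hv ▸ Reachable.refl v
    have hadj : (parentGraph r p).Adj v (p v) :=
      parentGraph_adj.2 ⟨(apply_ne_self_of_exists_iterate_eq hroot hv).symm, .inl ⟨hv, rfl⟩⟩
    exact hadj.reachable.trans (ih (p v) hk)

lemma edgeSet_parentGraph : (parentGraph r p).edgeSet = (fun v => s(v, p v)) '' {r}ᶜ := by
  rw [parentGraph, edgeSet_fromEdgeSet, sdiff_eq_left, Set.disjoint_left]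
  rintro _ ⟨v, hv, rfl⟩ hdiag
  exact apply_ne_self_of_exists_iterate_eq hroot hv (Sym2.mk_isDiag_iff.1 hdiag).symm

/-- Two distinct non-root vertices sharing their parent edge would be swapped by `p`, and a
`2`-periodic orbit avoiding `r` never reaches `r`. -/
lemma injOn_parentEdge : InjOn (fun v => s(v, p v)) {r}ᶜ := by
  intro v hv w hw hvw
  rcases Sym2.eq_iff.1 hvw with ⟨h, -⟩ | ⟨hvp, hpv⟩
  · exact h
  have hper : Function.IsPeriodicPt p 2 v := by
    simp only [Function.IsPeriodicPt, Function.IsFixedPt, Function.iterate_succ_apply',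
      Function.iterate_zero_apply, hpv, ← hvp]
  obtain ⟨k, hk⟩ := hroot v
  rw [← hper.iterate_mod_apply] at hk
  rcases Nat.mod_two_eq_zero_or_one k with h | h <;> rw [h] at hk
  · exact absurd hk hv
  · exact absurd (by simpa [hpv] using hk) hw

lemma isTree_parentGraph [Finite V] : (parentGraph r p).IsTree := by
  rw [isTree_iff_connected_and_card]
  refine ⟨(connected_iff_exists_forall_reachable _).2
    ⟨r, fun v => (parentGraph_reachable hroot v).symm⟩, ?_⟩
  rw [edgeSet_parentGraph hroot, Nat.card_coe_set_eq, (injOn_parentEdge hroot).ncard_image,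
    ← ncard_add_ncard_compl {r}, ncard_singleton, add_comm]

end RootReachable

end SimpleGraph

section GracefulStar

variable {n : ℕ} {A : Finset ℕ}

def IsFlipped (n : ℕ) (A : Finset ℕ) (v : ℕ) : Prop := v ∈ A ∨ n - v ∈ A

instance (n : ℕ) (A : Finset ℕ) : DecidablePred (IsFlipped n A) := fun _ => instDecidableOr

def flipParent (n : ℕ) (A : Finset ℕ) (v : Fin (n + 1)) : Fin (n + 1) :=
  if IsFlipped n A v then Fin.last n else 0

def flipTree (n : ℕ) (A : Finset ℕ) : SimpleGraph (Fin (n + 1)) :=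
  parentGraph 0 (flipParent n A)

lemma isFlipped_sub_iff {v : ℕ} (hv : v ≤ n) : IsFlipped n A (n - v) ↔ IsFlipped n A v := by
  rw [IsFlipped, IsFlipped, Nat.sub_sub_self hv, or_comm]

lemma gcol_flipParent (v : Fin (n + 1)) :
    gcol n s(v, flipParent n A v) = if IsFlipped n A v then n - v else v := by
  have := v.isLt
  unfold flipParent
  split_ifs <;> simp only [gcol, Sym2.lift_mk, Fin.val_last, Fin.val_zero] <;> omega

variable (hA : A ⊆ Finset.Icc 1 ((n - 1) / 2))
include hA

lemma IsFlipped.pos_and_lt {v : ℕ} (h : IsFlipped n A v) : 0 < v ∧ v < n := by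
  rcases h with h | h <;> have := Finset.mem_Icc.1 (hA h) <;> omega

lemma isFlipped_iff_mem {k : ℕ} (hk : k ≤ (n - 1) / 2) : IsFlipped n A k ↔ k ∈ A := by
  refine ⟨fun h => h.resolve_right fun hmem => ?_, .inl⟩
  have := Finset.mem_Icc.1 (hA hmem)
  omega

lemma flipParent_zero : flipParent n A 0 = 0 :=
  if_neg fun h => (h.pos_and_lt hA).1.ne rfl

lemma flipParent_last : flipParent n A (Fin.last n) = 0 :=
  if_neg fun h => (h.pos_and_lt hA).2.ne rfl

lemma flipParent_iterate_two (v : Fin (n + 1)) : (flipParent n A)^[2] v = 0 := by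
  show flipParent n A (if IsFlipped n A v then Fin.last n else 0) = 0
  split_ifs
  exacts [flipParent_last hA, flipParent_zero hA]

lemma injective_gcol_flipParent : Function.Injective fun v => gcol n s(v, flipParent n A v) := by
  intro v w hvw
  simp only [gcol_flipParent] at hvw
  have hv := v.isLt
  have hw := w.isLt
  apply Fin.ext
  split_ifs at hvw with hfv hfw hfw
  · have := (hfv.pos_and_lt hA).2
    have := (hfw.pos_and_lt hA).2
    omega
  · exact absurd ((isFlipped_sub_iff (by omega)).2 hfv) (hvw ▸ hfw)
  · exact absurd ((isFlipped_sub_iff (by omega)).2 hfw) (hvw ▸ hfv)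
  · exact hvw

lemma isTree_flipTree : (flipTree n A).IsTree :=
  isTree_parentGraph fun v => ⟨2, flipParent_iterate_two hA v⟩

lemma injOn_gcol_flipTree : InjOn (gcol n) (flipTree n A).edgeSet := by
  rw [flipTree, edgeSet_parentGraph fun v => ⟨2, flipParent_iterate_two hA v⟩]
  exact ((injective_gcol_flipParent hA).injOn).image_of_comp

lemma flipTree_adj_last_iff {k : Fin (n + 1)} (hk : k.val ∈ Finset.Icc 1 ((n - 1) / 2)) :
    (flipTree n A).Adj k (Fin.last n) ↔ k.val ∈ A := by
  rw [Finset.mem_Icc] at hk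
  have hn : n ≠ 0 := by omega
  have hk0 : k ≠ 0 := by rintro rfl; simp at hk
  have hklast : k ≠ Fin.last n := by rintro rfl; simp at hk; omega
  rw [flipTree, parentGraph_adj, flipParent_last hA, ← isFlipped_iff_mem hA hk.2]
  simp [hklast, hk0, flipParent, hk0.symm, hn]

omit hA in
lemma injOn_flipTree :
    InjOn (flipTree n) ((Finset.Icc 1 ((n - 1) / 2)).powerset : Set (Finset ℕ)) := by
  intro A hA B hB hAB
  rw [Finset.mem_coe, Finset.mem_powerset] at hA hB
  have hmem_iff (j : ℕ) (hj : j ∈ Finset.Icc 1 ((n - 1) / 2)) : j ∈ A ↔ j ∈ B := by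
    have hjn : j < n + 1 := by rw [Finset.mem_Icc] at hj; omega
    rw [← flipTree_adj_last_iff hA (k := ⟨j, hjn⟩) hj,
      ← flipTree_adj_last_iff hB (k := ⟨j, hjn⟩) hj, hAB]
  ext j
  exact ⟨fun h => (hmem_iff j (hA h)).1 h, fun h => (hmem_iff j (hB h)).2 h⟩

end GracefulStar

theorem stmt6_general (n : ℕ) :
    2 ^ ((n - 1) / 2) ≤
      {T : SimpleGraph (Fin (n + 1)) | T.IsTree ∧ Set.InjOn (gcol n) T.edgeSet}.ncard := by
  set subsets := (Finset.Icc 1 ((n - 1) / 2)).powerset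
  have hmaps : MapsTo (flipTree n) subsets
      {T : SimpleGraph (Fin (n + 1)) | T.IsTree ∧ Set.InjOn (gcol n) T.edgeSet} :=
    fun A hA => ⟨isTree_flipTree (Finset.mem_powerset.1 hA),
      injOn_gcol_flipTree (Finset.mem_powerset.1 hA)⟩
  calc 2 ^ ((n - 1) / 2) = (subsets : Set (Finset ℕ)).ncard := by
        rw [ncard_coe_finset, Finset.card_powerset, Nat.card_Icc, Nat.add_sub_cancel]
    _ = (flipTree n '' subsets).ncard := injOn_flipTree.ncard_image.symm
    _ ≤ _ := ncard_le_ncard hmaps.image_subset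

/-- the graceful colouring of `K_{n+1}` (`n ≥ 2`) yields at least
`2^{⌊(n-1)/2⌋}` distinct heterochromatic spanning trees. -/
theorem stmt6 (n : ℕ) (hn : 2 ≤ n) :
    2 ^ ((n - 1) / 2) ≤
      {T : SimpleGraph (Fin (n + 1)) | T.IsTree ∧ Set.InjOn (gcol n) T.edgeSet}.ncard :=
  stmt6_general n
end

section
/- The graceful colouring of K_{n+1} is a beautiful colouring; in particular: each monochromatic subgraph is acyclic, and taking V_2 to be the set of even-labelled vertices and V_1 the set of odd-labelled vertices when n is even (and V_2 = even-labelled vertices {0,2,...,n-1}, V_1 = odd-labelled vertices {1,3,...,n} when n is odd), conditions (i), (ii), (iii) of the definition of beautiful hold. -/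
open SimpleGraph Set

def gclass (n i : ℕ) : Set (Sym2 (Fin (n + 1))) :=
  {e ∈ (⊤ : SimpleGraph (Fin (n + 1))).edgeSet | gcol n e = i}

/-! An edge of colour `i` is a pair `{a, a + i}` with `a < n + 1 - i`, so `D_i` is indexed by its
lower endpoints. In `D_i` every vertex `v` has at most one smaller neighbour, `v - i`, so the
largest vertex of a cycle could not have its two cycle neighbours below it: `D_i` is acyclic.
For odd `i` every edge joins vertices of different parity, which gives (i); the vertex set of
`D_i` is the union of the intervals `[0, n - i]` and `[i, n]`, and counting parities in these
gives (ii). For even `i` the edge `{a, a + i}` lies inside the parity class of `a`, which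
gives (iii). -/

theorem SimpleGraph.isAcyclic_of_subsingleton_lower_neighbors {V : Type*} [LinearOrder V]
    {G : SimpleGraph V} (h : ∀ v, {w | G.Adj v w ∧ w < v}.Subsingleton) : G.IsAcyclic := by
  intro u c hc
  obtain ⟨m, hm, hmax⟩ := c.support.toFinset.exists_max_image id ⟨u, by simp⟩
  rw [List.mem_toFinset] at hm
  have hlower : c.toSubgraph.neighborSet m ⊆ {w | G.Adj m w ∧ w < m} := fun w hw =>
    ⟨hw.adj_sub, (hmax w (List.mem_toFinset.mpr (c.mem_verts_toSubgraph.mp hw.snd_mem))).lt_of_ne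
      hw.adj_sub.ne'⟩
  obtain ⟨a, b, hab, hnbr⟩ := Set.ncard_eq_two.mp (hc.ncard_neighborSet_toSubgraph_eq_two hm)
  exact hab ((h m).anti hlower (by simp [hnbr]) (by simp [hnbr]))

theorem Finset.card_filter_Ico_mod_two (a b : ℕ) {r : ℕ} (hr : r < 2) :
    ((Finset.Ico a b).filter (· % 2 = r)).card = (b + 1 - r) / 2 - (a + 1 - r) / 2 := by
  induction b with
  | zero =>
    rw [Finset.Ico_eq_empty_of_le (Nat.zero_le a), Finset.filter_empty, Finset.card_empty]
    omega
  | succ b ih =>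
    rcases Nat.lt_or_ge b a with hb | hb
    · rw [Finset.Ico_eq_empty_of_le hb, Finset.filter_empty, Finset.card_empty]
      omega
    · rw [Nat.Ico_succ_right_eq_insert_Ico hb, Finset.filter_insert]
      split_ifs with hbr
      · rw [Finset.card_insert_of_notMem (by simp), ih]
        omega
      · rw [ih]
        omega

theorem Fin.ncard_setOf_val {m : ℕ} (p : ℕ → Prop) [DecidablePred p] :
    {v : Fin m | p v}.ncard = ((Finset.range m).filter p).card := by
  rw [← Set.ncard_image_of_injective _ Fin.val_injective, ← Set.ncard_coe_finset]
  congr 1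
  ext x
  simp only [Set.mem_image, Set.mem_ofPred_eq, Finset.coe_filter, Finset.mem_range]
  exact ⟨fun ⟨v, hv, hx⟩ => hx ▸ ⟨v.isLt, hv⟩, fun ⟨hx, hp⟩ => ⟨⟨x, hx⟩, hp, rfl⟩⟩

theorem gcol_mk (n : ℕ) (u v : Fin (n + 1)) : gcol n s(u, v) = max (u : ℕ) v - min (u : ℕ) v :=
  rfl

theorem gcol_mem_Icc {n : ℕ} {e : Sym2 (Fin (n + 1))}
    (he : e ∈ (⊤ : SimpleGraph (Fin (n + 1))).edgeSet) : gcol n e ∈ Set.Icc 1 n := by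
  induction e using Sym2.ind with
  | _ u v =>
    rw [mem_edgeSet, top_adj, ← Fin.val_ne_iff] at he
    rw [gcol_mk, Set.mem_Icc]
    omega

theorem mem_gclass_mk {n i : ℕ} (hi : 0 < i) {u v : Fin (n + 1)} :
    s(u, v) ∈ gclass n i ↔ (u : ℕ) + i = v ∨ (v : ℕ) + i = u := by
  rw [gclass, Set.mem_sep_iff, mem_edgeSet, top_adj, gcol_mk, ← Fin.val_ne_iff]
  omega

def gclassEdge (n i : ℕ) (a : Fin (n + 1 - i)) : Sym2 (Fin (n + 1)) :=
  s(⟨a, by omega⟩, ⟨a + i, by omega⟩)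

theorem gclassEdge_eq_mk_iff {n i : ℕ} {a : Fin (n + 1 - i)} {u v : Fin (n + 1)} :
    gclassEdge n i a = s(u, v) ↔ (a : ℕ) = u ∧ (a : ℕ) + i = v ∨ (a : ℕ) = v ∧ (a : ℕ) + i = u := by
  simp only [gclassEdge, Sym2.eq_iff, Fin.ext_iff]

theorem gclassEdge_injective (n i : ℕ) : Function.Injective (gclassEdge n i) := by
  intro a b h
  simp only [gclassEdge, Sym2.eq_iff, Fin.ext_iff] at h
  omega

theorem range_gclassEdge {n i : ℕ} (hi : 0 < i) : Set.range (gclassEdge n i) = gclass n i := by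
  ext e
  induction e using Sym2.ind with
  | _ u v =>
    simp only [Set.mem_range, gclassEdge_eq_mk_iff, mem_gclass_mk hi]
    constructor
    · rintro ⟨a, h⟩
      omega
    · rintro (h | h)
      · exact ⟨⟨u, by omega⟩, by dsimp only; omega⟩
      · exact ⟨⟨v, by omega⟩, by dsimp only; omega⟩

theorem ncard_gclass {n i : ℕ} (hi : 0 < i) : (gclass n i).ncard = n + 1 - i := by
  rw [← range_gclassEdge hi, Set.ncard_range_of_injective (gclassEdge_injective n i),
    Nat.card_eq_fintype_card, Fintype.card_fin]

theorem isAcyclic_gclass {n i : ℕ} (hi : 0 < i) : (fromEdgeSet (gclass n i)).IsAcyclic := by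
  refine isAcyclic_of_subsingleton_lower_neighbors fun v a ha b hb => ?_
  simp only [Set.mem_ofPred_eq, fromEdgeSet_adj, mem_gclass_mk hi, Fin.lt_def] at ha hb
  exact Fin.ext (by omega)

theorem ncard_setOf_val_mod_two (m : ℕ) {r : ℕ} (hr : r < 2) :
    {v : Fin m | v.val % 2 = r}.ncard = (m + 1 - r) / 2 := by
  rw [Fin.ncard_setOf_val (· % 2 = r), Finset.range_eq_Ico, Finset.card_filter_Ico_mod_two _ _ hr]
  omega

theorem exists_odd_gclass_iff {n : ℕ} {u v : Fin (n + 1)} (huv : u ≠ v) :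
    (∃ i ∈ Set.Icc 1 n, Odd i ∧ s(u, v) ∈ gclass n i) ↔
      (u.val % 2 = 1 ∧ v.val % 2 = 0) ∨ (u.val % 2 = 0 ∧ v.val % 2 = 1) := by
  have hedge : s(u, v) ∈ (⊤ : SimpleGraph (Fin (n + 1))).edgeSet := by simpa using huv
  rw [← Fin.val_ne_iff] at huv
  constructor
  · rintro ⟨i, ⟨hi, -⟩, hodd, hmem⟩
    rw [mem_gclass_mk hi] at hmem
    rw [Nat.odd_iff] at hodd
    omega
  · intro h
    refine ⟨gcol n s(u, v), gcol_mem_Icc hedge, ?_, hedge, rfl⟩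
    rw [gcol_mk, Nat.odd_iff]
    omega

theorem setOf_mem_gclass {n i : ℕ} (hi : 0 < i) :
    {v : Fin (n + 1) | ∃ e ∈ gclass n i, v ∈ e} = {v | v.val + i ≤ n ∨ i ≤ v.val} := by
  ext v
  simp only [Set.mem_ofPred_eq, ← range_gclassEdge hi, Set.exists_range_iff, gclassEdge,
    Sym2.mem_iff, Fin.ext_iff]
  constructor
  · rintro ⟨a, h | h⟩ <;> omega
  · intro h
    by_cases hv : v.val + i ≤ n
    · exact ⟨⟨v, by omega⟩, Or.inl rfl⟩
    · exact ⟨⟨v - i, by omega⟩, Or.inr (by dsimp only; omega)⟩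

theorem ncard_setOf_mem_gclass_inter {n i : ℕ} (hi : 0 < i) (q : ℕ → Prop) [DecidablePred q] :
    ({v : Fin (n + 1) | ∃ e ∈ gclass n i, v ∈ e} ∩ {v | q v}).ncard =
      ((Finset.Ico 0 (n + 1 - i)).filter q).card +
        ((Finset.Ico (max i (n + 1 - i)) (n + 1)).filter q).card := by
  -- starting the second interval at `max i (n + 1 - i)` keeps the union disjoint
  have hW : (Finset.range (n + 1)).filter (fun x => x + i ≤ n ∨ i ≤ x) =
      Finset.Ico 0 (n + 1 - i) ∪ Finset.Ico (max i (n + 1 - i)) (n + 1) := by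
    ext x
    simp only [Finset.mem_filter, Finset.mem_range, Finset.mem_union, Finset.mem_Ico]
    omega
  have hdisj : Disjoint (Finset.Ico 0 (n + 1 - i)) (Finset.Ico (max i (n + 1 - i)) (n + 1)) :=
    Finset.disjoint_left.mpr fun x hx hy => by
      rw [Finset.mem_Ico] at hx hy
      omega
  rw [setOf_mem_gclass hi, ← Set.ofPred_and,
    Fin.ncard_setOf_val (fun x => (x + i ≤ n ∨ i ≤ x) ∧ q x), ← Finset.filter_filter, hW,
    Finset.filter_union, Finset.card_union_of_disjoint (Finset.disjoint_filter_filter hdisj)]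

theorem ncard_setOf_mem_gclass_inter_mod_two {n i : ℕ} (hi : i ∈ Set.Icc 1 n) (hodd : Odd i) :
    ({v : Fin (n + 1) | ∃ e ∈ gclass n i, v ∈ e} ∩ {v | v.val % 2 = 1}).ncard =
        {v : Fin (n + 1) | ∃ e ∈ gclass n i, v ∈ e}.ncard / 2 ∧
      ({v : Fin (n + 1) | ∃ e ∈ gclass n i, v ∈ e} ∩ {v | v.val % 2 = 0}).ncard =
        ({v : Fin (n + 1) | ∃ e ∈ gclass n i, v ∈ e}.ncard + 1) / 2 := by
  have hW := ncard_setOf_mem_gclass_inter (n := n) hi.1 (fun _ => True)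
  simp only [Set.ofPred_true, Set.inter_univ, Finset.filter_true, Nat.card_Ico] at hW
  rw [hW, ncard_setOf_mem_gclass_inter hi.1 (· % 2 = 1),
    ncard_setOf_mem_gclass_inter hi.1 (· % 2 = 0), Finset.card_filter_Ico_mod_two _ _ one_lt_two,
    Finset.card_filter_Ico_mod_two _ _ one_lt_two, Finset.card_filter_Ico_mod_two _ _ zero_lt_two,
    Finset.card_filter_Ico_mod_two _ _ zero_lt_two]
  rw [Nat.odd_iff] at hodd
  have := hi.2
  omega

theorem setOf_mem_gclass_forall_mod_two {n i : ℕ} (hi : 0 < i) (heven : Even i) (r : ℕ) :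
    {e ∈ gclass n i | ∀ v : Fin (n + 1), v ∈ e → v.val % 2 = r} =
      gclassEdge n i '' {a | a.val % 2 = r} := by
  obtain ⟨k, rfl⟩ := heven
  rw [← range_gclassEdge hi]
  ext e
  constructor
  · rintro ⟨⟨a, rfl⟩, h⟩
    exact ⟨a, h _ (Sym2.mem_mk_left _ _), rfl⟩
  · rintro ⟨a, ha, rfl⟩
    refine ⟨⟨a, rfl⟩, fun v hv => ?_⟩
    rcases Sym2.mem_iff.mp hv with rfl | rfl
    · exact ha
    · rw [Set.mem_ofPred_eq] at ha
      dsimp only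
      omega

theorem ncard_setOf_mem_gclass_forall_mod_two {n i : ℕ} (hi : 0 < i) (heven : Even i) {r : ℕ}
    (hr : r < 2) :
    {e ∈ gclass n i | ∀ v : Fin (n + 1), v ∈ e → v.val % 2 = r}.ncard = (n + 2 - i - r) / 2 := by
  rw [setOf_mem_gclass_forall_mod_two hi heven,
    Set.ncard_image_of_injective _ (gclassEdge_injective n i), ncard_setOf_val_mod_two _ hr]
  omega

/-- the graceful colouring of `K_{n+1}` is beautiful: every edge gets a
colour in `{1,…,n}`, the class `D_i` of colour `i` has size `n+1-i`, each
monochromatic subgraph is acyclic and, with `V₂` the even-labelled vertices and `V₁`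
the odd-labelled ones (so `|V₁| = ⌊(n+1)/2⌋`, `|V₂| = ⌈(n+1)/2⌉`), conditions (i),
(ii), (iii) of the definition of a beautiful colouring hold.  (A class `D_i` has
size `n+1-i ≡ n (mod 2)` exactly when `i` is odd.) -/
theorem stmt7 (n : ℕ) :
    (∀ e ∈ (⊤ : SimpleGraph (Fin (n + 1))).edgeSet, gcol n e ∈ Set.Icc 1 n) ∧
    (∀ i ∈ Set.Icc 1 n, (gclass n i).ncard = n + 1 - i) ∧
    (∀ i ∈ Set.Icc 1 n, (SimpleGraph.fromEdgeSet (gclass n i)).IsAcyclic) ∧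
    ({v : Fin (n + 1) | v.val % 2 = 1} ∪ {v : Fin (n + 1) | v.val % 2 = 0} = Set.univ) ∧
    Disjoint {v : Fin (n + 1) | v.val % 2 = 1} {v : Fin (n + 1) | v.val % 2 = 0} ∧
    ({v : Fin (n + 1) | v.val % 2 = 1} : Set (Fin (n + 1))).ncard = (n + 1) / 2 ∧
    ({v : Fin (n + 1) | v.val % 2 = 0} : Set (Fin (n + 1))).ncard = (n + 2) / 2 ∧
    -- (i): the union of classes of size ≡ n (mod 2), i.e. odd colours, is the
    -- complete bipartite graph between the odd- and even-labelled vertices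
    (∀ u v : Fin (n + 1), u ≠ v →
      ((∃ i ∈ Set.Icc 1 n, Odd i ∧ s(u, v) ∈ gclass n i) ↔
        (u.val % 2 = 1 ∧ v.val % 2 = 0) ∨ (u.val % 2 = 0 ∧ v.val % 2 = 1))) ∧
    -- (ii): each class of size ≡ n (mod 2) splits its vertex set evenly
    (∀ i ∈ Set.Icc 1 n, Odd i →
      ({v : Fin (n + 1) | ∃ e ∈ gclass n i, v ∈ e} ∩
          {v : Fin (n + 1) | v.val % 2 = 1}).ncard =
        {v : Fin (n + 1) | ∃ e ∈ gclass n i, v ∈ e}.ncard / 2 ∧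
      ({v : Fin (n + 1) | ∃ e ∈ gclass n i, v ∈ e} ∩
          {v : Fin (n + 1) | v.val % 2 = 0}).ncard =
        ({v : Fin (n + 1) | ∃ e ∈ gclass n i, v ∈ e}.ncard + 1) / 2) ∧
    -- (iii): each class of size ≢ n (mod 2), i.e. of even colour `i` and size
    -- `j = n+1-i`, has `⌊j/2⌋` edges inside V₁ and `⌈j/2⌉` edges inside V₂
    (∀ i ∈ Set.Icc 1 n, Even i →
      ({e ∈ gclass n i | ∀ v : Fin (n + 1), v ∈ e → v.val % 2 = 1}).ncard =
        (n + 1 - i) / 2 ∧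
      ({e ∈ gclass n i | ∀ v : Fin (n + 1), v ∈ e → v.val % 2 = 0}).ncard =
        (n + 2 - i) / 2) := by
  refine ⟨fun _ he => gcol_mem_Icc he, fun _ hi => ncard_gclass hi.1,
    fun _ hi => isAcyclic_gclass hi.1, ?_, ?_, ncard_setOf_val_mod_two _ one_lt_two,
    ncard_setOf_val_mod_two _ zero_lt_two, fun _ _ huv => exists_odd_gclass_iff huv,
    fun _ hi hodd => ncard_setOf_mem_gclass_inter_mod_two hi hodd, fun i hi heven =>
      ⟨(ncard_setOf_mem_gclass_forall_mod_two hi.1 heven one_lt_two).trans (by omega),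
        ncard_setOf_mem_gclass_forall_mod_two hi.1 heven zero_lt_two⟩⟩
  · ext v
    simp only [Set.mem_union, Set.mem_ofPred_eq, Set.mem_univ, iff_true]
    omega
  · exact Set.disjoint_left.mpr fun v h1 h2 => by
      rw [Set.mem_ofPred_eq] at h1 h2
      omega
end

section
/- In the stellar colouring of K_{n+1}, every tree T with n+1 vertices has a heterochromatic embedding: there is a subgraph of K_{n+1} isomorphic to T whose n edges receive n distinct colours. -/
open SimpleGraph Set

/-- The stellar colouring of `K_{n+1}`: an edge gets the larger of its endpoint
labels as colour. -/
def scol (n : ℕ) : Sym2 (Fin (n + 1)) → ℕ :=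
  Sym2.lift ⟨fun a b => max a.val b.val, fun a b => by simp [max_comm]⟩

/-- In a tree, adjacent vertices have different distances to any root. -/
lemma aux_dist_ne {V : Type*} [DecidableEq V] {G : SimpleGraph V} (hT : G.IsTree) (r : V) {u v : V}
    (h : G.Adj u v) : G.dist r u ≠ G.dist r v := by
  intro heq
  obtain ⟨p, hp, hl⟩ := hT.isConnected.exists_path_of_dist r u
  by_cases hv : v ∈ p.support
  · have hspec := p.take_spec hv
    have hlen : (p.takeUntil v hv).length + (p.dropUntil v hv).length = p.length := by
      conv_rhs => rw [← hspec]
      rw [SimpleGraph.Walk.length_append]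
    have h1 : G.dist r v ≤ (p.takeUntil v hv).length := SimpleGraph.dist_le _
    have h2 : (p.dropUntil v hv).length ≠ 0 := by
      intro h0
      exact h.ne' (SimpleGraph.Walk.eq_of_length_eq_zero h0)
    omega
  · have hq : (p.concat h).IsPath := by
      rw [← SimpleGraph.Walk.isPath_reverse_iff, SimpleGraph.Walk.reverse_concat]
      refine SimpleGraph.Walk.IsPath.cons ?_ ?_
      · rwa [SimpleGraph.Walk.isPath_reverse_iff]
      · rwa [SimpleGraph.Walk.support_reverse, List.mem_reverse]
    obtain ⟨p', hp', hl'⟩ := hT.isConnected.exists_path_of_dist r v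
    have := hT.IsAcyclic.path_unique ⟨p.concat h, hq⟩ ⟨p', hp'⟩
    have hval : (p.concat h).length = p'.length := by
      rw [Subtype.ext_iff] at this
      simp only at this
      rw [this]
    rw [SimpleGraph.Walk.length_concat, hl, hl'] at hval
    omega

/-- In a tree, each vertex has at most one neighbour closer to the root. -/
lemma aux_parent_unique {V : Type*} {G : SimpleGraph V} (hT : G.IsTree) (r : V)
    {u u' w : V} (h : G.Adj u w) (h' : G.Adj u' w)
    (hu : G.dist r u < G.dist r w) (hu' : G.dist r u' < G.dist r w) : u = u' := by
  have htri : G.dist r w ≤ G.dist r u + 1 := by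
    have := hT.isConnected.dist_triangle (u := r) (v := u) (w := w)
    rwa [SimpleGraph.dist_eq_one_iff_adj.mpr h] at this
  have htri' : G.dist r w ≤ G.dist r u' + 1 := by
    have := hT.isConnected.dist_triangle (u := r) (v := u') (w := w)
    rwa [SimpleGraph.dist_eq_one_iff_adj.mpr h'] at this
  obtain ⟨p, hp, hl⟩ := hT.isConnected.exists_path_of_dist r u
  obtain ⟨p', hp', hl'⟩ := hT.isConnected.exists_path_of_dist r u'
  have hq : (p.concat h).IsPath := by
    refine SimpleGraph.Walk.isPath_of_length_eq_dist _ ?_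
    rw [SimpleGraph.Walk.length_concat, hl]
    omega
  have hq' : (p'.concat h').IsPath := by
    refine SimpleGraph.Walk.isPath_of_length_eq_dist _ ?_
    rw [SimpleGraph.Walk.length_concat, hl']
    omega
  have heq := hT.IsAcyclic.path_unique ⟨p.concat h, hq⟩ ⟨p'.concat h', hq'⟩
  rw [Subtype.ext_iff] at heq
  simp only at heq
  obtain ⟨hv, -⟩ := SimpleGraph.Walk.concat_inj heq
  exact hv

/-- in the stellar colouring of `K_{n+1}`, every tree `T` with `n+1`
vertices has a heterochromatic embedding: a subgraph of `K_{n+1}` isomorphic to `T`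
all of whose edges receive distinct colours. -/
theorem stmt16 (n : ℕ) (T : SimpleGraph (Fin (n + 1))) (hT : T.IsTree) :
    ∃ T' : SimpleGraph (Fin (n + 1)),
      Nonempty (T ≃g T') ∧ Set.InjOn (scol n) T'.edgeSet := by
  classical
  set r : Fin (n + 1) := 0 with hr
  set d : Fin (n + 1) → ℕ := fun v => T.dist r v with hd
  set key : Fin (n + 1) → ℕ := fun v => d v * (n + 1) + v.val with hkey
  set σ : Equiv.Perm (Fin (n + 1)) := Tuple.sort key with hσ
  -- sorting property: smaller distance implies smaller index
  have hS : ∀ i j : Fin (n + 1), d (σ i) < d (σ j) → i < j := by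
    intro i j hij
    by_contra hle
    push_neg at hle
    have hmono : key (σ j) ≤ key (σ i) := Tuple.monotone_sort key hle
    have h1 : key (σ i) < key (σ j) := by
      have hvi : (σ i).val < n + 1 := (σ i).isLt
      simp only [hkey]
      nlinarith
    omega
  set T' : SimpleGraph (Fin (n + 1)) := T.comap (σ : Fin (n + 1) ≃ Fin (n + 1)).toEmbedding
    with hT'
  refine ⟨T', ⟨(SimpleGraph.Iso.comap (σ : Fin (n + 1) ≃ Fin (n + 1)) T).symm⟩, ?_⟩
  have hadj : ∀ a b : Fin (n + 1), T'.Adj a b ↔ T.Adj (σ a) (σ b) := fun a b => Iff.rfl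
  -- given an edge a-b with a < b, the larger endpoint has larger distance
  have hup : ∀ a b : Fin (n + 1), T'.Adj a b → a < b → d (σ a) < d (σ b) := by
    intro a b hab hlt
    have hne := aux_dist_ne hT r ((hadj a b).mp hab)
    rcases lt_or_gt_of_ne hne with h | h
    · exact h
    · exact absurd (hS b a h) (by omega)
  -- unique smaller neighbour
  have huniq : ∀ a b c : Fin (n + 1), T'.Adj a b → T'.Adj c b → a < b → c < b → a = c := by
    intro a b c hab hcb ha hc
    have := aux_parent_unique hT r ((hadj a b).mp hab) ((hadj c b).mp hcb)
      (hup a b hab ha) (hup c b hcb hc)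
    exact σ.injective this
  have hscol : ∀ a b : Fin (n + 1), scol n s(a, b) = max a.val b.val := fun a b => rfl
  -- normalized injectivity
  have hmain : ∀ a b c e : Fin (n + 1), a < b → c < e → T'.Adj a b → T'.Adj c e →
      scol n s(a, b) = scol n s(c, e) → s(a, b) = s(c, e) := by
    intro a b c e hab hce h1 h2 hcol
    rw [hscol, hscol] at hcol
    rw [show max a.val b.val = b.val from max_eq_right (Fin.le_def.mp hab.le),
      show max c.val e.val = e.val from max_eq_right (Fin.le_def.mp hce.le)] at hcol
    have hbe : b = e := Fin.val_injective hcol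
    subst hbe
    rw [huniq a b c h1 h2 hab hce]
  intro e he e' he' hcol
  induction e using Sym2.ind with
  | _ a b =>
  induction e' using Sym2.ind with
  | _ c e =>
  have h1 : T'.Adj a b := (T'.mem_edgeSet).mp he
  have h2 : T'.Adj c e := (T'.mem_edgeSet).mp he'
  rcases lt_trichotomy a b with hab | hab | hab
  · rcases lt_trichotomy c e with hce | hce | hce
    · exact hmain a b c e hab hce h1 h2 hcol
    · exact absurd hce h2.ne
    · rw [Sym2.eq_swap (a := c)] at hcol ⊢
      exact hmain a b e c hab hce h1 h2.symm hcol
  · exact absurd hab h1.ne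
  · rcases lt_trichotomy c e with hce | hce | hce
    · rw [Sym2.eq_swap (a := a)] at hcol ⊢
      exact hmain b a c e hab hce h1.symm h2 hcol
    · exact absurd hce h2.ne
    · rw [Sym2.eq_swap (a := a), Sym2.eq_swap (a := c)] at hcol ⊢
      exact hmain b a e c hab hce h1.symm h2.symm hcol
end

section
/- Let G be a spanning subgraph of the complete bipartite graph K_{m,m} with exactly 1 + 2·C(m,2) edges, equipped with a cute (2m-1)-edge-colouring, i.e., a colouring whose colour classes have sizes 1, 1, 1, 2, 2, 3, 3, ..., m-1, m-1. Then G has a heterochromatic spanning tree. -/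
/-!
The colour classes form a transversal problem in the cycle matroid of `K_{m,m}`. By Rado's
theorem a heterochromatic spanning tree exists as soon as, for every `k`, any `k` colour classes
together contain a forest with `k` edges. If the largest forest inside a bipartite edge set `E`
has `r` edges, the components of `E` have `a_q` vertices with `∑ (a_q - 1) = r`, so
`4 |E| ≤ ∑ a_q ^ 2 ≤ (r + 1) ^ 2`; while any `k` classes of a cute colouring are at least as
large as the `k` smallest ones, which have `⌊k ^ 2 / 4⌋ + 1` edges in total.
-/

open SimpleGraph Finset

/-- Rank function of a matroid; `insert_eq_of_subset` is monotonicity of the closure operator. -/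
structure IsRankFunction {α : Type*} [DecidableEq α] (r : Finset α → ℕ) : Prop where
  empty : r ∅ = 0
  mono : Monotone r
  insert_le (e : α) (X : Finset α) : r (insert e X) ≤ r X + 1
  insert_eq_of_subset {e : α} {X Y : Finset α} :
    X ⊆ Y → r (insert e X) = r X → r (insert e Y) = r Y

namespace IsRankFunction

variable {α : Type*} [DecidableEq α] {r : Finset α → ℕ}

theorem union_eq_of_forall_insert_eq (hr : IsRankFunction r) {X D : Finset α}
    (hD : ∀ e ∈ D, r (insert e X) = r X) : r (X ∪ D) = r X := by
  induction D using Finset.induction_on with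
  | empty => simp
  | insert a D _ ih =>
    rw [union_insert, hr.insert_eq_of_subset subset_union_left (hD a (mem_insert_self a D)),
      ih fun e he => hD e (mem_insert_of_mem he)]

theorem union_add_le_union_add_of_subset (hr : IsRankFunction r) (Z : Finset α) {X Y : Finset α}
    (hXY : X ⊆ Y) : r (Z ∪ Y) + r X ≤ r (Z ∪ X) + r Y := by
  induction Z using Finset.induction_on with
  | empty =>
    have := hr.mono hXY
    simp only [empty_union]
    omega
  | insert a Z _ ih =>
    rw [insert_union, insert_union]
    rcases (hr.mono (subset_insert a (Z ∪ X))).eq_or_lt with heq | hlt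
    · rw [hr.insert_eq_of_subset (union_subset_union_right hXY) heq.symm, ← heq]
      exact ih
    · have := hr.insert_le a (Z ∪ Y)
      omega

theorem union_add_inter_le (hr : IsRankFunction r) (X Y : Finset α) :
    r (X ∪ Y) + r (X ∩ Y) ≤ r X + r Y := by
  have h := hr.union_add_le_union_add_of_subset Y (inter_subset_left : X ∩ Y ⊆ X)
  rwa [union_eq_left.mpr inter_subset_right, union_comm, add_comm (r Y)] at h

theorem contract (hr : IsRankFunction r) {e : α} (he : r {e} = 1) :
    IsRankFunction fun X => r (insert e X) - 1 := by
  have hpos (X : Finset α) : 1 ≤ r (insert e X) :=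
    he ▸ hr.mono (singleton_subset_iff.mpr (mem_insert_self e X))
  refine ⟨by simp [he], fun X Y h => Nat.sub_le_sub_right (hr.mono (insert_subset_insert e h)) 1,
    fun a X => ?_, fun {a X Y} hXY h => ?_⟩
  · rw [insert_comm]
    have := hr.insert_le a (insert e X)
    omega
  · simp only [insert_comm e a] at h ⊢
    have := hpos X
    have := hpos Y
    have := hr.mono (subset_insert a (insert e X))
    have := hr.insert_eq_of_subset (e := a) (insert_subset_insert e hXY) (by omega)
    omega

variable {ι : Type*} [DecidableEq ι]

/-- If no `e ∈ D` worked, the union of all tight subfamilies (tight by submodularity) would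
span all of `D`. -/
theorem exists_mem_forall_card_lt (hr : IsRankFunction r) (C : ι → Finset α) {I : Finset ι}
    {D : Finset α} (hI : ∀ S ⊆ I, S.card ≤ r (S.biUnion C))
    (hD : ∀ S ⊆ I, S.card < r (S.biUnion C ∪ D)) :
    ∃ e ∈ D, ∀ S ⊆ I, S.card < r (insert e (S.biUnion C)) := by
  by_contra! hcon
  set IsTight : Finset ι → Prop := fun S => r (S.biUnion C) ≤ S.card
  have tight_union {A B : Finset ι} (hA : A ⊆ I) (hB : B ⊆ I) (hAt : IsTight A)
      (hBt : IsTight B) : IsTight (A ∪ B) := by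
    have := hr.union_add_inter_le (A.biUnion C) (B.biUnion C)
    have : r ((A ∩ B).biUnion C) ≤ r (A.biUnion C ∩ B.biUnion C) :=
      hr.mono (subset_inter (biUnion_subset_biUnion_of_subset_left C inter_subset_left)
        (biUnion_subset_biUnion_of_subset_left C inter_subset_right))
    have := hI (A ∩ B) (inter_subset_left.trans hA)
    have := card_union_add_card_inter A B
    simp only [IsTight, union_biUnion] at hAt hBt ⊢
    omega
  set U := (I.powerset.filter IsTight).sup id
  have hU : U ⊆ I ∧ IsTight U :=
    Finset.sup_induction (p := fun S => S ⊆ I ∧ IsTight S)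
      ⟨empty_subset I, by simp [IsTight, hr.empty]⟩
      (fun A hA B hB => ⟨union_subset hA.1 hB.1, tight_union hA.1 hB.1 hA.2 hB.2⟩)
      fun S hS => (mem_filter.mp hS).imp mem_powerset.mp id
  have hclosure : ∀ e ∈ D, r (insert e (U.biUnion C)) = r (U.biUnion C) := by
    intro e he
    obtain ⟨S, hSI, hSe⟩ := hcon e he
    have := hI S hSI
    have := hr.mono (subset_insert e (S.biUnion C))
    have hSt : IsTight S := by
      show r (S.biUnion C) ≤ S.card
      omega
    have hSU : S ⊆ U := le_sup (f := id) (mem_filter.mpr ⟨mem_powerset.mpr hSI, hSt⟩)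
    exact hr.insert_eq_of_subset (biUnion_subset_biUnion_of_subset_left C hSU) (by omega)
  have hlt := hD U hU.1
  rw [hr.union_eq_of_forall_insert_eq hclosure] at hlt
  exact hlt.not_ge hU.2

/-- Rado's theorem. -/
theorem exists_transversal [Nonempty α] (hr : IsRankFunction r) (C : ι → Finset α)
    (I : Finset ι) (hI : ∀ S ⊆ I, S.card ≤ r (S.biUnion C)) :
    ∃ f : ι → α, (∀ i ∈ I, f i ∈ C i) ∧ I.card ≤ r (I.image f) := by
  induction I using Finset.induction_on generalizing r with
  | empty => exact ⟨fun _ => Classical.arbitrary α, by simp, by simp⟩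
  | insert j I hj ih =>
    have hIsub : ∀ S ⊆ I, S ⊆ insert j I := fun S hS => hS.trans (subset_insert j I)
    obtain ⟨e, he, hgood⟩ := hr.exists_mem_forall_card_lt C (fun S hS => hI S (hIsub S hS))
      fun S hS => by
        have := hI (insert j S) (insert_subset_insert j hS)
        rwa [card_insert_of_notMem (fun h => hj (hS h)), biUnion_insert, union_comm,
          Nat.add_one_le_iff] at this
    have hre : r {e} = 1 := by
      have hlt := hgood ∅ (empty_subset I)
      have hle := hr.insert_le e ∅
      simp only [biUnion_empty, card_empty, insert_empty, hr.empty] at hlt hle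
      omega
    obtain ⟨f, hfC, hfr⟩ := ih (hr.contract hre) fun S hS => by
      have := hgood S hS
      omega
    refine ⟨Function.update f j e, fun i hi => ?_, ?_⟩
    · rcases mem_insert.mp hi with rfl | hi
      · simpa using he
      · rw [Function.update_of_ne (ne_of_mem_of_not_mem hi hj)]
        exact hfC i hi
    · have himage : (insert j I).image (Function.update f j e) = insert e (I.image f) := by
        rw [image_insert, Function.update_self,
          image_congr fun i hi => Function.update_of_ne (ne_of_mem_of_not_mem hi hj) e f]
      have := hre ▸ hr.mono (singleton_subset_iff.mpr (mem_insert_self e (I.image f)))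
      rw [himage, card_insert_of_notMem hj]
      omega

end IsRankFunction

namespace SimpleGraph

variable {V : Type*} {G : SimpleGraph V} {a b x y : V}

theorem Reachable.cases_of_sup_edge (h : (G ⊔ edge a b).Reachable x y) :
    G.Reachable x y ∨ (G.Reachable x a ∧ G.Reachable b y) ∨
      (G.Reachable x b ∧ G.Reachable a y) := by
  obtain ⟨w⟩ := h
  induction w with
  | nil => exact .inl .rfl
  | @cons x z y hxz _ ih =>
    rcases (sup_adj _ _ _ _).mp hxz with hG | hab
    · have := hG.reachable
      rcases ih with h | ⟨h₁, h₂⟩ | ⟨h₁, h₂⟩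
      · exact .inl (this.trans h)
      · exact .inr (.inl ⟨this.trans h₁, h₂⟩)
      · exact .inr (.inr ⟨this.trans h₁, h₂⟩)
    · obtain ⟨⟨rfl, rfl⟩ | ⟨rfl, rfl⟩, -⟩ := (edge_adj ..).mp hab
      · rcases ih with h | ⟨-, h⟩ | ⟨-, h⟩
        · exact .inr (.inl ⟨.rfl, h⟩)
        · exact .inr (.inl ⟨.rfl, h⟩)
        · exact .inl h
      · rcases ih with h | ⟨-, h⟩ | ⟨-, h⟩
        · exact .inr (.inr ⟨.rfl, h⟩)
        · exact .inl h
        · exact .inr (.inr ⟨.rfl, h⟩)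

theorem fromEdgeSet_insert_mk [DecidableEq V] (E : Finset (Sym2 V)) (a b : V) :
    fromEdgeSet ↑(insert s(a, b) E) = fromEdgeSet (E : Set (Sym2 V)) ⊔ edge a b := by
  rw [coe_insert, Set.insert_eq, fromEdgeSet_union, sup_comm]
  rfl

open ConnectedComponent in
theorem ConnectedComponent.injective_map_ofLE_sup_edge (hab : G.Reachable a b) :
    Function.Injective (map (Hom.ofLE (le_sup_left : G ≤ G ⊔ edge a b))) := by
  refine ConnectedComponent.ind₂ fun u v huv => ConnectedComponent.sound ?_
  simp only [map_mk, Hom.ofLE_apply, ConnectedComponent.eq] at huv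
  rcases huv.cases_of_sup_edge with h | ⟨h₁, h₂⟩ | ⟨h₁, h₂⟩
  · exact h
  · exact (h₁.trans hab).trans h₂
  · exact (h₁.trans hab.symm).trans h₂

theorem card_connectedComponent_sup_edge_of_reachable_s17 (hab : G.Reachable a b) :
    Nat.card (G ⊔ edge a b).ConnectedComponent = Nat.card G.ConnectedComponent :=
  (Nat.card_eq_of_bijective _ ⟨ConnectedComponent.injective_map_ofLE_sup_edge hab,
    ConnectedComponent.surjective_map_ofLE _⟩).symm

theorem card_connectedComponent_le_card [Fintype V] (G : SimpleGraph V) :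
    Nat.card G.ConnectedComponent ≤ Fintype.card V :=
  Nat.card_eq_fintype_card (α := V) ▸
    Nat.card_le_card_of_surjective _ fun c => c.exists_rep

variable [Finite V]

theorem card_connectedComponent_sup_edge_lt (hab : ¬G.Reachable a b) :
    Nat.card (G ⊔ edge a b).ConnectedComponent < Nat.card G.ConnectedComponent := by
  have : Fintype G.ConnectedComponent := Fintype.ofFinite _
  have : Fintype (G ⊔ edge a b).ConnectedComponent := Fintype.ofFinite _
  simp only [Nat.card_eq_fintype_card]
  refine Fintype.card_lt_of_surjective_not_injective _
    (ConnectedComponent.surjective_map_ofLE le_sup_left)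
    fun hinj => hab (ConnectedComponent.exact (hinj ?_))
  simp only [ConnectedComponent.map_mk, Hom.ofLE_apply]
  have hne : a ≠ b := fun h => hab (h ▸ .rfl)
  exact ConnectedComponent.sound (Adj.reachable (by simp [edge_adj, hne]))

/-- Merging the component of `b` into that of `a` is the only identification that the new edge
can cause. -/
theorem card_connectedComponent_le_sup_edge_add_one :
    Nat.card G.ConnectedComponent ≤ Nat.card (G ⊔ edge a b).ConnectedComponent + 1 := by
  classical
  rw [← Finite.card_option]
  refine Nat.card_le_card_of_injective
    (fun c => if c = G.connectedComponentMk b then none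
      else some (ConnectedComponent.map (Hom.ofLE (le_sup_left : G ≤ G ⊔ edge a b)) c)) ?_
  refine ConnectedComponent.ind₂ fun u v huv => ?_
  by_cases hu : G.connectedComponentMk u = G.connectedComponentMk b <;>
    by_cases hv : G.connectedComponentMk v = G.connectedComponentMk b
  · exact hu.trans hv.symm
  · simp [hu, hv] at huv
  · simp [hu, hv] at huv
  · simp only [hu, hv, if_false, Option.some_inj, ConnectedComponent.map_mk, Hom.ofLE_apply,
      ConnectedComponent.eq] at huv
    rcases huv.cases_of_sup_edge with h | ⟨-, h⟩ | ⟨h, -⟩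
    · exact ConnectedComponent.sound h
    · exact absurd (ConnectedComponent.sound h.symm) hv
    · exact absurd (ConnectedComponent.sound h) hu

end SimpleGraph

section GraphicRank

variable {V : Type*} [Fintype V]

/-- The rank of `E` in the cycle matroid on `V`, i.e. the size of a spanning forest of `(V, E)`. -/
noncomputable def graphicRank (E : Finset (Sym2 V)) : ℕ :=
  Fintype.card V - Nat.card (fromEdgeSet (E : Set (Sym2 V))).ConnectedComponent

variable [DecidableEq V]

theorem graphicRank_insert_le (e : Sym2 V) (E : Finset (Sym2 V)) :
    graphicRank (insert e E) ≤ graphicRank E + 1 := by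
  induction e with
  | _ a b =>
    have := card_connectedComponent_le_sup_edge_add_one (G := fromEdgeSet (E : Set (Sym2 V)))
      (a := a) (b := b)
    rw [graphicRank, graphicRank, fromEdgeSet_insert_mk]
    omega

theorem graphicRank_insert_eq_iff {E : Finset (Sym2 V)} {a b : V} :
    graphicRank (insert s(a, b) E) = graphicRank E ↔
      (fromEdgeSet (E : Set (Sym2 V))).Reachable a b := by
  rw [graphicRank, graphicRank, fromEdgeSet_insert_mk]
  refine ⟨fun h => ?_, fun h => by rw [card_connectedComponent_sup_edge_of_reachable_s17 h]⟩
  by_contra hab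
  have := card_connectedComponent_sup_edge_lt hab
  have := card_connectedComponent_le_card (fromEdgeSet (E : Set (Sym2 V)))
  omega

theorem isRankFunction_graphicRank : IsRankFunction (graphicRank (V := V)) where
  empty := by
    rw [graphicRank, coe_empty, fromEdgeSet_empty, ← Nat.card_eq_of_bijective _
      ⟨fun u v h => reachable_bot.mp (ConnectedComponent.exact h), fun c => c.exists_rep⟩,
      Nat.card_eq_fintype_card, Nat.sub_self]
  mono E F h := Nat.sub_le_sub_left
    (ConnectedComponent.card_le_card_of_le (fromEdgeSet_mono (coe_subset.mpr h))) _
  insert_le := graphicRank_insert_le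
  insert_eq_of_subset {e X Y} hXY h := by
    induction e with
    | _ a b =>
      exact graphicRank_insert_eq_iff.mpr
        ((graphicRank_insert_eq_iff.mp h).mono (fromEdgeSet_mono (coe_subset.mpr hXY)))

end GraphicRank

theorem isTree_fromEdgeSet_of_card_le_graphicRank {V : Type*} [Fintype V]
    {E : Finset (Sym2 V)} (hE : E.card + 1 ≤ Fintype.card V)
    (hr : Fintype.card V ≤ graphicRank E + 1) :
    (fromEdgeSet (E : Set (Sym2 V))).IsTree := by
  set T := fromEdgeSet (E : Set (Sym2 V))
  have : Nonempty V := Fintype.card_pos_iff.mp (by omega)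
  have hconn : T.Connected := by
    have := card_connectedComponent_le_card T
    have : 0 < Nat.card T.ConnectedComponent := Nat.card_pos
    have hr' : Fintype.card V ≤ Fintype.card V - Nat.card T.ConnectedComponent + 1 := hr
    have : Subsingleton T.ConnectedComponent := (Nat.card_eq_one_iff_unique.mp (by omega)).1
    exact ⟨fun u v => ConnectedComponent.exact (Subsingleton.elim _ _)⟩
  have hedges : Nat.card T.edgeSet ≤ E.card := by
    rw [Nat.card_coe_set_eq, ← Set.ncard_coe_finset]
    exact Set.ncard_le_ncard (by simp [T, edgeSet_fromEdgeSet]) E.finite_toSet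
  have hV := hconn.card_vert_le_card_edgeSet_add_one
  rw [Nat.card_eq_fintype_card (α := V)] at hV
  refine isTree_iff_connected_and_card.mpr ⟨hconn, ?_⟩
  rw [Nat.card_eq_fintype_card (α := V)]
  omega

theorem exists_isTree_le_injOn_of_card_le_graphicRank {V κ : Type*} [Fintype V] [DecidableEq V]
    [DecidableEq κ] (G : SimpleGraph V) [DecidableRel G.Adj] (col : Sym2 V → κ) (K : Finset κ)
    (hV : Fintype.card V = K.card + 1)
    (hK : ∀ S ⊆ K, S.card ≤ graphicRank {e ∈ G.edgeFinset | col e ∈ S}) :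
    ∃ T ≤ G, T.IsTree ∧ Set.InjOn col T.edgeSet := by
  obtain ⟨v⟩ : Nonempty V := Fintype.card_pos_iff.mp (by omega)
  have : Nonempty (Sym2 V) := ⟨s(v, v)⟩
  obtain ⟨f, hfC, hfr⟩ := isRankFunction_graphicRank.exists_transversal
    (fun c => {e ∈ G.edgeFinset | col e = c}) K fun S hS => by
      convert hK S hS using 2
      ext e
      simp [eq_comm, and_comm]
  have hf (c : κ) (hc : c ∈ K) : f c ∈ G.edgeSet ∧ col (f c) = c := by simpa using hfC c hc
  refine ⟨fromEdgeSet ↑(K.image f), ?_, isTree_fromEdgeSet_of_card_le_graphicRank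
    (hV ▸ Nat.succ_le_succ card_image_le) (hV ▸ Nat.succ_le_succ hfr), ?_⟩
  · rw [fromEdgeSet_le]
    rintro _ ⟨he, -⟩
    obtain ⟨c, hc, rfl⟩ := mem_image.mp he
    exact (hf c hc).1
  · intro e he e' he' hcol
    rw [edgeSet_fromEdgeSet] at he he'
    obtain ⟨c, hc, rfl⟩ := mem_image.mp he.1
    obtain ⟨c', hc', rfl⟩ := mem_image.mp he'.1
    rw [(hf c hc).2, (hf c' hc').2] at hcol
    exact congrArg f hcol

/-- Superadditivity of `w ↦ (w + 1) ^ 2` on positive integers, applied to the largest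
product `a * b` with `a + b = w + 1`. -/
theorem four_mul_sum_mul_le_sq {ι : Type*} (s : Finset ι) {a b w : ι → ℕ}
    (h : ∀ i ∈ s, a i + b i = w i + 1) :
    4 * ∑ i ∈ s, a i * b i ≤ (∑ i ∈ s, w i + 1) ^ 2 := by
  classical
  induction s using Finset.induction_on with
  | empty => simp
  | insert j s hj ih =>
    rw [sum_insert hj, sum_insert hj]
    have ih := ih fun i hi => h i (mem_insert_of_mem hi)
    have hj := h j (mem_insert_self j s)
    set W := ∑ i ∈ s, w i
    have hab : 4 * (a j * b j) ≤ (w j + 1) ^ 2 := by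
      rw [← hj]; nlinarith [sq_nonneg ((a j : ℤ) - b j)]
    rcases Nat.eq_zero_or_pos (a j * b j) with h0 | hpos
    · have := Nat.pow_le_pow_left (by omega : W + 1 ≤ w j + W + 1) 2
      omega
    rcases Nat.eq_zero_or_pos W with hW | hW
    · have hP : ∑ i ∈ s, a i * b i = 0 := by
        rw [hW] at ih
        omega
      rw [hP, hW, add_zero, add_zero]
      exact hab
    · have := CanonicallyOrderedAdd.mul_pos.mp hpos
      have : 1 ≤ w j := by omega
      nlinarith

theorem four_mul_card_le_sq_graphicRank {α β : Type*} [Fintype α] [Fintype β]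
    {E : Finset (Sym2 (α ⊕ β))}
    (hE : (E : Set (Sym2 (α ⊕ β))) ⊆ (completeBipartiteGraph α β).edgeSet) :
    4 * E.card ≤ (graphicRank E + 1) ^ 2 := by
  classical
  set H := fromEdgeSet (E : Set (Sym2 (α ⊕ β)))
  set L : H.ConnectedComponent → Finset α := fun c => {u | H.connectedComponentMk (.inl u) = c}
  set R : H.ConnectedComponent → Finset β := fun c => {v | H.connectedComponentMk (.inr v) = c}
  have hcover :
      E ⊆ univ.biUnion fun c => (L c ×ˢ R c).image fun p => s(.inl p.1, .inr p.2) := by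
    intro e he
    induction e with
    | _ x y =>
      have hK : (completeBipartiteGraph α β).Adj x y := hE he
      have hxy : H.Adj x y := (fromEdgeSet_adj _).mpr ⟨he, hK.ne⟩
      rcases x with u | v <;> rcases y with u' | v'
      · simp at hK
      · simp only [mem_biUnion, mem_image, mem_product, mem_univ, true_and]
        exact ⟨H.connectedComponentMk (.inl u), (u, v'),
          ⟨by simp [L], by simpa [R] using hxy.reachable.symm⟩, rfl⟩
      · simp only [mem_biUnion, mem_image, mem_product, mem_univ, true_and]
        exact ⟨H.connectedComponentMk (.inl u'), (u', v),
          ⟨by simp [L], by simpa [R] using hxy.reachable⟩, Sym2.eq_swap⟩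
      · simp at hK
  have hcard : E.card ≤ ∑ c, (L c).card * (R c).card :=
    (card_le_card hcover).trans (card_biUnion_le.trans (sum_le_sum fun c _ =>
      card_image_le.trans (card_product _ _).le))
  have hpos (c : H.ConnectedComponent) : 1 ≤ (L c).card + (R c).card := by
    induction c using ConnectedComponent.ind with | h w => ?_
    rcases w with u | v
    · have : 0 < (L (H.connectedComponentMk (.inl u))).card := card_pos.mpr ⟨u, by simp [L]⟩
      omega
    · have : 0 < (R (H.connectedComponentMk (.inr v))).card := card_pos.mpr ⟨v, by simp [R]⟩
      omega
  have hsum : ∑ c, ((L c).card + (R c).card) = Fintype.card (α ⊕ β) := by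
    have hα := card_eq_sum_card_fiberwise (s := univ) (t := univ)
      (f := fun u : α => H.connectedComponentMk (.inl u)) fun _ _ => mem_univ _
    have hβ := card_eq_sum_card_fiberwise (s := univ) (t := univ)
      (f := fun v : β => H.connectedComponentMk (.inr v)) fun _ _ => mem_univ _
    rw [sum_add_distrib, ← hα, ← hβ, card_univ, card_univ, Fintype.card_sum]
  have hrank : ∑ c, ((L c).card + (R c).card - 1) = graphicRank E := by
    rw [sum_tsub_distrib _ fun c _ => hpos c, hsum, sum_const, smul_eq_mul, mul_one, card_univ,
      graphicRank, Nat.card_eq_fintype_card]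
  calc 4 * E.card ≤ 4 * ∑ c, (L c).card * (R c).card := Nat.mul_le_mul_left 4 hcard
    _ ≤ (graphicRank E + 1) ^ 2 :=
      hrank ▸ four_mul_sum_mul_le_sq _ fun c _ => (Nat.sub_add_cancel (hpos c)).symm

theorem le_graphicRank_of_sq_lt_four_mul_card {α β : Type*} [Fintype α] [Fintype β]
    {E : Finset (Sym2 (α ⊕ β))}
    (hE : (E : Set (Sym2 (α ⊕ β))) ⊆ (completeBipartiteGraph α β).edgeSet) {k : ℕ}
    (hk : k ^ 2 < 4 * E.card) : k ≤ graphicRank E := by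
  by_contra! h
  have := Nat.pow_le_pow_left (show graphicRank E + 1 ≤ k from h) 2
  have := four_mul_card_le_sq_graphicRank hE
  omega

theorem sum_Icc_card_le_sum_of_monotone {M : Type*} [AddCommMonoid M] [PartialOrder M]
    [IsOrderedAddMonoid M] {f : ℕ → M} (hf : Monotone f) {s : Finset ℕ}
    (hs : ∀ i ∈ s, 1 ≤ i) :
    ∑ i ∈ Icc 1 s.card, f i ≤ ∑ i ∈ s, f i := by
  induction s using Finset.induction_on_max with
  | empty => simp
  | insert a s hlt ih =>
    have ha : a ∉ s := fun h => lt_irrefl a (hlt a h)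
    have hcard : s.card + 1 ≤ a := by
      have hsub := card_le_card (s := s) (t := Icc 1 (a - 1)) fun i hi =>
        mem_Icc.mpr ⟨hs i (mem_insert_of_mem hi), Nat.le_sub_one_of_lt (hlt i hi)⟩
      have := hs a (mem_insert_self a s)
      rw [Nat.card_Icc] at hsub
      omega
    rw [card_insert_of_notMem ha, sum_Icc_succ_top (Nat.le_add_left 1 _), sum_insert ha,
      add_comm]
    exact add_le_add (hf hcard) (ih fun i hi => hs i (mem_insert_of_mem hi))

theorem sum_Icc_max_half_one {k : ℕ} (hk : 1 ≤ k) :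
    ∑ i ∈ Icc 1 k, max (i / 2) 1 = k ^ 2 / 4 + 1 := by
  induction k, hk using Nat.le_induction with
  | base => rfl
  | succ k hk ih =>
    rw [sum_Icc_succ_top (by omega), ih, max_eq_left (by omega)]
    obtain ⟨j, rfl | rfl⟩ := Nat.even_or_odd' k
    · have h₁ : (2 * j) ^ 2 = 4 * (j * j) := by ring
      have h₂ : (2 * j + 1) ^ 2 = 4 * (j * j + j) + 1 := by ring
      omega
    · have h₁ : (2 * j + 1) ^ 2 = 4 * (j * j + j) + 1 := by ring
      have h₂ : (2 * j + 1 + 1) ^ 2 = 4 * (j * j + 2 * j + 1) := by ring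
      omega

theorem sq_card_lt_four_mul_card_filter_of_cute {σ : Type*} (E : Finset σ) (col : σ → ℕ)
    {n : ℕ} {g : ℕ → ℕ} (hg : Set.BijOn g (Set.Icc 1 n) (Set.Icc 1 n))
    (hcute : ∀ i ∈ Set.Icc 1 n, {e ∈ E | col e = g i}.card = max (i / 2) 1)
    {S : Finset ℕ} (hS : S ⊆ Icc 1 n) (hne : S.Nonempty) :
    S.card ^ 2 < 4 * {e ∈ E | col e ∈ S}.card := by
  set S' := {i ∈ Icc 1 n | g i ∈ S}
  have hS' : ∀ i ∈ S', i ∈ Set.Icc 1 n := fun i hi => by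
    simpa using (mem_filter.mp hi).1
  have hinj : Set.InjOn g S' := hg.injOn.mono hS'
  have himage : S'.image g = S := by
    ext c
    refine ⟨fun hc => ?_, fun hc => ?_⟩
    · obtain ⟨i, hi, rfl⟩ := mem_image.mp hc
      exact (mem_filter.mp hi).2
    · obtain ⟨i, hi, rfl⟩ := hg.surjOn (by simpa using hS hc)
      exact mem_image_of_mem g (mem_filter.mpr ⟨by simpa using hi, hc⟩)
  have hcard : {e ∈ E | col e ∈ S}.card = ∑ i ∈ S', max (i / 2) 1 :=
    calc {e ∈ E | col e ∈ S}.card = ∑ c ∈ S, {e ∈ E | col e = c}.card := by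
          rw [card_eq_sum_card_fiberwise (s := {e ∈ E | col e ∈ S}) (t := S) fun e he =>
            (mem_filter.mp he).2]
          refine sum_congr rfl fun c hc => congrArg card ?_
          ext e
          simp only [mem_filter]
          exact ⟨fun h => ⟨h.1.1, h.2⟩, fun h => ⟨⟨h.1, h.2 ▸ hc⟩, h.2⟩⟩
      _ = ∑ i ∈ S', {e ∈ E | col e = g i}.card := by rw [← himage, sum_image hinj]
      _ = ∑ i ∈ S', max (i / 2) 1 := sum_congr rfl fun i hi => hcute i (hS' i hi)
  have hmin := sum_Icc_card_le_sum_of_monotone (f := fun i => max (i / 2) 1)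
    (fun a b hab => max_le_max (Nat.div_le_div_right hab) le_rfl) fun i hi => (hS' i hi).1
  rw [← card_image_of_injOn hinj, himage, sum_Icc_max_half_one (card_pos.mpr hne)] at hmin
  omega

theorem stmt17_general (m : ℕ) (G : SimpleGraph (Fin m ⊕ Fin m))
    (hG : G ≤ completeBipartiteGraph (Fin m) (Fin m))
    (hE : G.edgeSet.ncard = 1 + 2 * m.choose 2)
    (col : Sym2 (Fin m ⊕ Fin m) → ℕ)
    (g : ℕ → ℕ) (hg : Set.BijOn g (Set.Icc 1 (2 * m - 1)) (Set.Icc 1 (2 * m - 1)))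
    (hcute : ∀ i ∈ Set.Icc 1 (2 * m - 1),
      ({e ∈ G.edgeSet | col e = g i} : Set (Sym2 (Fin m ⊕ Fin m))).ncard = max (i / 2) 1) :
    ∃ T : SimpleGraph (Fin m ⊕ Fin m), T ≤ G ∧ T.IsTree ∧ Set.InjOn col T.edgeSet := by
  classical
  have hm : m ≠ 0 := by
    rintro rfl
    simp [Set.eq_empty_of_isEmpty G.edgeSet] at hE
  have hcute' (i : ℕ) (hi : i ∈ Set.Icc 1 (2 * m - 1)) :
      {e ∈ G.edgeFinset | col e = g i}.card = max (i / 2) 1 := by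
    rw [← hcute i hi, ← Set.ncard_coe_finset]
    congr 1
    ext e
    simp
  refine exists_isTree_le_injOn_of_card_le_graphicRank G col (Finset.Icc 1 (2 * m - 1))
    (by rw [Fintype.card_sum, Fintype.card_fin, Nat.card_Icc]; omega) fun S hS => by
      rcases S.eq_empty_or_nonempty with rfl | hne
      · simp
      refine le_graphicRank_of_sq_lt_four_mul_card (fun e he => edgeSet_mono hG ?_)
        (sq_card_lt_four_mul_card_filter_of_cute _ col hg hcute' hS hne)
      exact (by simpa using he : e ∈ G.edgeSet ∧ col e ∈ S).1

/-- a spanning subgraph of `K_{m,m}` with `1 + 2·C(m,2)` edges carrying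
a cute `(2m-1)`-edge-colouring (class sizes `1, 1, 1, 2, 2, …, m-1, m-1`) has a
heterochromatic spanning tree.  (For `i = 1, …, 2m-1` the `i`-th class size is
`max (i/2) 1`, giving the multiset `{1, 1, 1, 2, 2, …, m-1, m-1}`.) -/
theorem stmt17 (m : ℕ) (G : SimpleGraph (Fin m ⊕ Fin m))
    (hG : G ≤ completeBipartiteGraph (Fin m) (Fin m))
    (hE : G.edgeSet.ncard = 1 + 2 * m.choose 2)
    (col : Sym2 (Fin m ⊕ Fin m) → ℕ)
    (hcol : ∀ e ∈ G.edgeSet, col e ∈ Set.Icc 1 (2 * m - 1))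
    (g : ℕ → ℕ) (hg : Set.BijOn g (Set.Icc 1 (2 * m - 1)) (Set.Icc 1 (2 * m - 1)))
    (hcute : ∀ i ∈ Set.Icc 1 (2 * m - 1),
      ({e ∈ G.edgeSet | col e = g i} : Set (Sym2 (Fin m ⊕ Fin m))).ncard = max (i / 2) 1) :
    ∃ T : SimpleGraph (Fin m ⊕ Fin m), T ≤ G ∧ T.IsTree ∧ Set.InjOn col T.edgeSet :=
  stmt17_general m G hG hE col g hg hcute
end

section
/- There exists a nice 5-edge-colouring of K_6 such that no heterochromatic spanning tree T of K_6 has maximum degree at least 4. -/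
open SimpleGraph Set

private def Mcol : Fin 6 → Fin 6 → ℕ :=
  ![![0,1,5,5,4,4],
    ![1,0,5,5,4,4],
    ![5,5,0,5,3,3],
    ![5,5,5,0,2,2],
    ![4,4,3,2,0,3],
    ![4,4,3,2,3,0]]

private def mycol : Sym2 (Fin 6) → ℕ :=
  Sym2.lift ⟨Mcol, by decide⟩

private def Fcols : Fin 6 → Finset ℕ :=
  ![{1,4,5},{1,4,5},{3,5},{2,5},{2,3,4},{2,3,4}]

private lemma col_mem (v u : Fin 6) (h : u ≠ v) : mycol s(v,u) ∈ Fcols v := by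
  revert v u; decide

private lemma fcols_card (v : Fin 6) : (Fcols v).card ≤ 3 := by
  revert v; decide

private lemma class_ncard (i : ℕ) :
    ({e ∈ (⊤ : SimpleGraph (Fin 6)).edgeSet | mycol e = i} : Set (Sym2 (Fin 6))).ncard
      = ((Finset.univ : Finset (Sym2 (Fin 6))).filter
          (fun e => ¬ e.IsDiag ∧ mycol e = i)).card := by
  rw [← Set.ncard_coe_finset]
  congr 1
  ext e
  induction e using Sym2.ind with
  | _ a b =>
    simp [SimpleGraph.mem_edgeSet, Set.mem_setOf_eq, SimpleGraph.top_adj,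
      Sym2.isDiag_iff_proj_eq]

/-- there is a nice 5-edge-colouring of `K_6` (class sizes `1,…,5`)
for which no heterochromatic spanning tree has maximum degree at least `4`, i.e.
every heterochromatic spanning tree has all degrees at most `3`. -/
theorem stmt19 : ∃ col : Sym2 (Fin 6) → ℕ,
    (∀ e ∈ (⊤ : SimpleGraph (Fin 6)).edgeSet, col e ∈ Set.Icc 1 5) ∧
    (∀ i ∈ Set.Icc 1 5,
      ({e ∈ (⊤ : SimpleGraph (Fin 6)).edgeSet | col e = i} : Set (Sym2 (Fin 6))).ncard = i) ∧
    (∀ T : SimpleGraph (Fin 6), T.IsTree → Set.InjOn col T.edgeSet →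
      ∀ v : Fin 6, {u : Fin 6 | T.Adj v u}.ncard ≤ 3) := by
  refine ⟨mycol, ?_, ?_, ?_⟩
  · rw [Sym2.forall]
    intro a b h
    rw [SimpleGraph.mem_edgeSet, SimpleGraph.top_adj] at h
    revert a b; decide
  · intro i hi
    have h1 := hi.1
    have h2 := hi.2
    rw [class_ncard]
    interval_cases i <;> decide
  · intro T hT hinj v
    have hinjφ : Set.InjOn (fun u => mycol s(v,u)) {u | T.Adj v u} := by
      intro a ha b hb h
      have ea : s(v,a) ∈ T.edgeSet := ha
      have eb : s(v,b) ∈ T.edgeSet := hb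
      exact Sym2.congr_right.mp (hinj ea eb h)
    have himg : ((fun u => mycol s(v,u)) '' {u | T.Adj v u}) ⊆ ↑(Fcols v) := by
      rintro c ⟨u, hu, rfl⟩
      exact col_mem v u (SimpleGraph.Adj.ne' hu)
    calc {u | T.Adj v u}.ncard
        = ((fun u => mycol s(v,u)) '' {u | T.Adj v u}).ncard :=
          (Set.ncard_image_of_injOn hinjφ).symm
      _ ≤ (↑(Fcols v) : Set ℕ).ncard :=
          Set.ncard_le_ncard himg (Fcols v).finite_toSet
      _ = (Fcols v).card := Set.ncard_coe_finset _
      _ ≤ 3 := fcols_card v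
end
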